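/- arXiv:1405.0318 — 6 statements merged into one kernel-verified Lean document; each statement's English description precedes it below -/
import Mathlib

section
/- If e ∈ K[Sing_n(F)] is a two-sided unit for the ideal K[Sing_n(F)], then e is central in K[M_n(F)]. -/
/-- The `K`-linear span of the singular `n × n` matrices inside `K[M_n(F)]`. -/
noncomputable def singSpan (K F : Type) [CommRing K] [Field F] (n : ℕ) :
    Submodule K (MonoidAlgebra K (Matrix (Fin n) (Fin n) F)) :=
  Submodule.span K
    {x | ∃ A : Matrix (Fin n) (Fin n) F, ¬ IsUnit A ∧ x = MonoidAlgebra.single A 1}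

lemma single_mul_mem (K F : Type) [CommRing K] [Field F] (n : ℕ)
    (g : Matrix (Fin n) (Fin n) F)
    {x : MonoidAlgebra K (Matrix (Fin n) (Fin n) F)} (hx : x ∈ singSpan K F n) :
    MonoidAlgebra.single g (1 : K) * x ∈ singSpan K F n := by
  refine Submodule.span_induction ?_ ?_ ?_ ?_ hx
  · rintro y ⟨A, hA, rfl⟩
    rw [MonoidAlgebra.single_mul_single, one_mul]
    apply Submodule.subset_span
    refine ⟨g * A, ?_, rfl⟩
    intro h
    rw [Matrix.isUnit_iff_isUnit_det] at h hA
    rw [Matrix.det_mul] at h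
    exact hA (isUnit_of_mul_isUnit_right h)
  · simp
  · intro a b _ _ ha hb
    rw [mul_add]; exact add_mem ha hb
  · intro k a _ ha
    rw [mul_smul_comm]; exact Submodule.smul_mem _ _ ha

lemma mem_mul_single (K F : Type) [CommRing K] [Field F] (n : ℕ)
    (g : Matrix (Fin n) (Fin n) F)
    {x : MonoidAlgebra K (Matrix (Fin n) (Fin n) F)} (hx : x ∈ singSpan K F n) :
    x * MonoidAlgebra.single g (1 : K) ∈ singSpan K F n := by
  refine Submodule.span_induction ?_ ?_ ?_ ?_ hx
  · rintro y ⟨A, hA, rfl⟩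
    rw [MonoidAlgebra.single_mul_single, one_mul]
    apply Submodule.subset_span
    refine ⟨A * g, ?_, rfl⟩
    intro h
    rw [Matrix.isUnit_iff_isUnit_det] at h hA
    rw [Matrix.det_mul] at h
    exact hA (isUnit_of_mul_isUnit_left h)
  · simp
  · intro a b _ _ ha hb
    rw [add_mul]; exact add_mem ha hb
  · intro k a _ ha
    rw [smul_mul_assoc]; exact Submodule.smul_mem _ _ ha

/-- A two-sided unit `e` for the ideal `K[Sing_n(F)]` is central in `K[M_n(F)]`. -/
theorem unit_of_singSpan_central
    (K F : Type) [CommRing K] [Field F] [Fintype F] (n : ℕ)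
    (e : MonoidAlgebra K (Matrix (Fin n) (Fin n) F))
    (he : e ∈ singSpan K F n)
    (heu : ∀ x ∈ singSpan K F n, e * x = x ∧ x * e = x) :
    ∀ y : MonoidAlgebra K (Matrix (Fin n) (Fin n) F), e * y = y * e := by
  -- first, e commutes with every single A 1
  have key : ∀ A : Matrix (Fin n) (Fin n) F,
      e * MonoidAlgebra.single A (1 : K) = MonoidAlgebra.single A (1 : K) * e := by
    intro A
    by_cases hA : IsUnit A
    · -- invertible case
      have hdet : IsUnit A.det := (Matrix.isUnit_iff_isUnit_det A).1 hA
      set u : MonoidAlgebra K (Matrix (Fin n) (Fin n) F) := MonoidAlgebra.single A 1 with hu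
      set v : MonoidAlgebra K (Matrix (Fin n) (Fin n) F) := MonoidAlgebra.single A⁻¹ 1 with hv
      have huv : u * v = 1 := by
        rw [hu, hv, MonoidAlgebra.single_mul_single, one_mul, Matrix.mul_nonsing_inv A hdet]
        rfl
      have hvu : v * u = 1 := by
        rw [hu, hv, MonoidAlgebra.single_mul_single, one_mul, Matrix.nonsing_inv_mul A hdet]
        rfl
      -- f := v * e * u is also a two-sided unit for the ideal
      set f := v * (e * u) with hf
      have hfmem : f ∈ singSpan K F n :=
        single_mul_mem K F n _ (mem_mul_single K F n _ he)
      have h1 : e * f = f := (heu f hfmem).1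
      have h2 : f * e = e := by
        -- f acts as identity on the ideal: f * x = x for x in ideal
        have hux : u * e ∈ singSpan K F n := single_mul_mem K F n _ he
        calc f * e = v * (e * (u * e)) := by rw [hf, mul_assoc, mul_assoc]
          _ = v * (u * e) := by rw [(heu _ hux).1]
          _ = e := by rw [← mul_assoc, hvu, one_mul]
      have hef : e * f = e := by
        have hxv : e * v ∈ singSpan K F n := mem_mul_single K F n _ he
        calc e * f = ((e * v) * e) * u := by rw [hf, ← mul_assoc, ← mul_assoc]
          _ = (e * v) * u := by rw [(heu _ hxv).2]
          _ = e * (v * u) := by rw [mul_assoc]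
          _ = e := by rw [hvu, mul_one]
      have hfeq : f = e := by rw [← h1, hef]
      -- from v * e * u = e, deduce e * u = u * e
      have : u * (v * (e * u)) = u * e := by rw [← hf, hfeq]
      rwa [← mul_assoc, huv, one_mul] at this
    · -- singular case
      have hmem : MonoidAlgebra.single A (1 : K) ∈ singSpan K F n :=
        Submodule.subset_span ⟨A, hA, rfl⟩
      rw [(heu _ hmem).1, (heu _ hmem).2]
  -- extend by linearity
  intro y
  induction y using MonoidAlgebra.induction_on with
  | of a =>
      simpa [MonoidAlgebra.of_apply] using key a
  | add f g hf hg =>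
      rw [mul_add, add_mul, hf, hg]
  | smul k f hf =>
      rw [mul_smul_comm, smul_mul_assoc, hf]
end

section
/- If e ∈ K[Sing_n(F)] is a unit for the ideal K[Sing_n(F)], then the complementary idempotent e^G = 1 − e is a central idempotent of K[M_n(F)] satisfying: (1) e^G K[M_n(F)] e^G is isomorphic as a K-algebra to the group algebra K[GL_n(F)], and (2) e^G · [A] = 0 for every singular matrix A ∈ Sing_n(F). -/
lemma singSpan_eq_supported (K F : Type) [CommRing K] [Field F] (n : ℕ) :
    singSpan K F n =
      MonoidAlgebra.supported K K {A : Matrix (Fin n) (Fin n) F | ¬ IsUnit A} := by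
  rw [MonoidAlgebra.supported_eq_span_single, singSpan]
  congr 1
  ext x
  constructor
  · rintro ⟨A, hA, rfl⟩; exact ⟨A, hA, rfl⟩
  · rintro ⟨A, hA, rfl⟩; exact ⟨A, hA, rfl⟩

lemma mem_singSpan_iff (K F : Type) [CommRing K] [Field F] (n : ℕ)
    (x : MonoidAlgebra K (Matrix (Fin n) (Fin n) F)) :
    x ∈ singSpan K F n ↔ ∀ A ∈ x.coeff.support, ¬ IsUnit A := by
  rw [singSpan_eq_supported, MonoidAlgebra.mem_supported]
  exact Iff.rfl

lemma singSpan_mul_right (K F : Type) [CommRing K] [Field F] (n : ℕ)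
    (x y : MonoidAlgebra K (Matrix (Fin n) (Fin n) F))
    (hx : x ∈ singSpan K F n) : x * y ∈ singSpan K F n := by
  classical
  rw [mem_singSpan_iff] at hx ⊢
  intro C hC
  obtain ⟨A, hA, B, hB, rfl⟩ := Finset.mem_mul.1 (MonoidAlgebra.support_coeff_mul_subset x y hC)
  intro hU
  rw [Matrix.isUnit_iff_isUnit_det, Matrix.det_mul] at hU
  exact hx A hA (Matrix.isUnit_iff_isUnit_det A |>.2 (isUnit_of_mul_isUnit_left hU))

lemma singSpan_mul_left (K F : Type) [CommRing K] [Field F] (n : ℕ)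
    (x y : MonoidAlgebra K (Matrix (Fin n) (Fin n) F))
    (hx : x ∈ singSpan K F n) : y * x ∈ singSpan K F n := by
  classical
  rw [mem_singSpan_iff] at hx ⊢
  intro C hC
  obtain ⟨B, hB, A, hA, rfl⟩ := Finset.mem_mul.1 (MonoidAlgebra.support_coeff_mul_subset y x hC)
  intro hU
  rw [Matrix.isUnit_iff_isUnit_det, Matrix.det_mul] at hU
  exact hx A hA (Matrix.isUnit_iff_isUnit_det A |>.2 (isUnit_of_mul_isUnit_right hU))

lemma single_mem_singSpan (K F : Type) [CommRing K] [Field F] (n : ℕ)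
    (A : Matrix (Fin n) (Fin n) F) (hA : ¬ IsUnit A) (c : K) :
    (MonoidAlgebra.single A c : MonoidAlgebra K (Matrix (Fin n) (Fin n) F)) ∈ singSpan K F n := by
  rw [mem_singSpan_iff]
  intro B hB
  have := Finsupp.support_single_subset (a := A) (b := c) hB
  simp only [Finset.mem_singleton] at this
  subst this; exact hA

/-- If `e ∈ K[Sing_n(F)]` is a unit for the ideal `K[Sing_n(F)]`, then
`e^G = 1 - e` is a central idempotent of `K[M_n(F)]` such that the corner
algebra `e^G K[M_n(F)] e^G` (with unit `e^G`) is isomorphic to the group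
algebra `K[GL_n(F)]`, and `e^G ⬝ [A] = 0` for every singular matrix `A`. -/
theorem complementary_idempotent_properties
    (K F : Type) [CommRing K] [Field F] [Fintype F] (n : ℕ)
    (e : MonoidAlgebra K (Matrix (Fin n) (Fin n) F))
    (he : e ∈ singSpan K F n) (hee : e * e = e)
    (heu : ∀ x ∈ singSpan K F n, e * x = x ∧ x * e = x) :
    (1 - e) * (1 - e) = 1 - e ∧
    (∀ y : MonoidAlgebra K (Matrix (Fin n) (Fin n) F), (1 - e) * y = y * (1 - e)) ∧
    (∀ A : Matrix (Fin n) (Fin n) F, ¬ IsUnit A →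
      (1 - e) * MonoidAlgebra.single A (1 : K) = 0) ∧
    ∃ φ : MonoidAlgebra K (GL (Fin n) F) →ₗ[K]
        MonoidAlgebra K (Matrix (Fin n) (Fin n) F),
      Function.Injective φ ∧
      (∀ a b, φ (a * b) = φ a * φ b) ∧
      φ 1 = 1 - e ∧
      (LinearMap.range φ : Set (MonoidAlgebra K (Matrix (Fin n) (Fin n) F))) =
        {y | ∃ x, y = (1 - e) * x * (1 - e)} := by
  classical
  have hid : (1 - e) * (1 - e) = 1 - e := by
    rw [sub_mul, one_mul, mul_sub, mul_one, hee]; abel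
  have hzero : ∀ x ∈ singSpan K F n, (1 - e) * x = 0 := by
    intro x hx
    rw [sub_mul, one_mul, (heu x hx).1, sub_self]
  have hcen : ∀ y, e * y = y * e := by
    intro y
    have h1 : e * y ∈ singSpan K F n := singSpan_mul_right K F n e y he
    have h2 : y * e ∈ singSpan K F n := singSpan_mul_left K F n e y he
    calc e * y = (e * y) * e := ((heu _ h1).2).symm
      _ = e * (y * e) := mul_assoc _ _ _
      _ = y * e := (heu _ h2).1
  have hcen' : ∀ y, (1 - e) * y = y * (1 - e) := by
    intro y
    rw [sub_mul, one_mul, mul_sub, mul_one, hcen]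
  refine ⟨hid, hcen', fun A hA => hzero _ (single_mem_singSpan K F n A hA 1), ?_⟩
  set u : GL (Fin n) F → Matrix (Fin n) (Fin n) F := fun g => (g : Matrix (Fin n) (Fin n) F)
    with hu
  have hu_inj : Function.Injective u := fun a b h => Units.ext h
  set Ψ : MonoidAlgebra K (GL (Fin n) F) → MonoidAlgebra K (Matrix (Fin n) (Fin n) F) :=
    MonoidAlgebra.mapDomain u with hΨ
  have hΨ0 : Ψ 0 = 0 := MonoidAlgebra.mapDomain_zero _
  have hΨadd : ∀ a b, Ψ (a + b) = Ψ a + Ψ b := fun a b => MonoidAlgebra.mapDomain_add _ a b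
  have hΨsingle : ∀ (g : GL (Fin n) F) (c : K),
      Ψ (MonoidAlgebra.single g c) = MonoidAlgebra.single (u g) c := fun g c =>
    MonoidAlgebra.mapDomain_single
  have hΨmul : ∀ a b, Ψ (a * b) = Ψ a * Ψ b := fun a b =>
    MonoidAlgebra.mapDomain_mul (Units.coeHom (Matrix (Fin n) (Fin n) F)) a b
  have hΨone : Ψ 1 = 1 :=
    MonoidAlgebra.mapDomain_one (Units.coeHom (Matrix (Fin n) (Fin n) F))
  set ψ : MonoidAlgebra K (GL (Fin n) F) →ₗ[K]
      MonoidAlgebra K (Matrix (Fin n) (Fin n) F) := MonoidAlgebra.mapDomainLinearMap K K u with hψ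
  have hψΨ : ∀ a, ψ a = Ψ a := fun a => rfl
  refine ⟨(LinearMap.mulLeft K (1 - e)).comp ψ, ?_, ?_, ?_, ?_⟩
  · rw [injective_iff_map_eq_zero]
    intro a ha
    have ha' : (1 - e) * Ψ a = 0 := ha
    rw [sub_mul, one_mul, sub_eq_zero] at ha'
    have h2 : (e * Ψ a) ∈ singSpan K F n := singSpan_mul_right K F n e _ he
    rw [← ha', mem_singSpan_iff] at h2
    have hsupp : (Ψ a).coeff.support = ∅ := by
      by_contra hne
      obtain ⟨A, hA⟩ := Finset.nonempty_of_ne_empty hne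
      have hA' := Finsupp.mapDomain_support (f := u) (s := a.coeff) hA
      obtain ⟨g, _, rfl⟩ := Finset.mem_image.1 hA'
      exact h2 _ hA g.isUnit
    have : Ψ a = 0 := MonoidAlgebra.coeff_eq_zero.1 (Finsupp.support_eq_empty.1 hsupp)
    exact MonoidAlgebra.mapDomain_injective hu_inj (by rw [show MonoidAlgebra.mapDomain u a = Ψ a from rfl, this, MonoidAlgebra.mapDomain_zero])
  · intro a b
    show (1 - e) * Ψ (a * b) = ((1 - e) * Ψ a) * ((1 - e) * Ψ b)
    rw [hΨmul]
    set x := Ψ a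
    set y := Ψ b
    have hx : Commute x (1 - e) := (hcen' x).symm
    calc (1 - e) * (x * y) = (1 - e) * (1 - e) * (x * y) := by rw [hid]
      _ = (1 - e) * x * ((1 - e) * y) := (hx.mul_mul_mul_comm (1 - e) y).symm
  · show (1 - e) * Ψ 1 = 1 - e
    rw [hΨone, mul_one]
  · have hlift : ∀ x : MonoidAlgebra K (Matrix (Fin n) (Fin n) F),
        ∃ a : MonoidAlgebra K (GL (Fin n) F), (1 - e) * x = (1 - e) * Ψ a := by
      intro x
      induction x using MonoidAlgebra.induction with
      | zero => exact ⟨0, by rw [hΨ0]⟩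
      | single_add A c f hAf hc ih =>
        obtain ⟨a, ha⟩ := ih
        by_cases hU : IsUnit A
        · refine ⟨MonoidAlgebra.single hU.unit c + a, ?_⟩
          have h1 : Ψ (MonoidAlgebra.single hU.unit c + a)
              = MonoidAlgebra.single A c + Ψ a := by
            rw [hΨadd, hΨsingle, show u hU.unit = A from hU.unit_spec]
          rw [h1, mul_add, mul_add, ha]
        · refine ⟨a, ?_⟩
          have h0 : (1 - e) * MonoidAlgebra.single A c = 0 :=
            hzero _ (single_mem_singSpan K F n A hU c)
          rw [mul_add, h0, zero_add, ha]
    ext y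
    simp only [SetLike.mem_coe, LinearMap.mem_range, Set.mem_setOf_eq]
    constructor
    · rintro ⟨a, rfl⟩
      refine ⟨Ψ a, ?_⟩
      show (1 - e) * Ψ a = (1 - e) * Ψ a * (1 - e)
      rw [← hcen' ((1 - e) * Ψ a), ← mul_assoc, hid]
    · rintro ⟨x, rfl⟩
      obtain ⟨a, ha⟩ := hlift x
      refine ⟨a, ?_⟩
      show (1 - e) * Ψ a = (1 - e) * x * (1 - e)
      rw [← ha, ← hcen' ((1 - e) * x), ← mul_assoc, hid]
end

section
/- An element e ∈ K[Sing_n(F)] is a two-sided unit for the ideal K[Sing_n(F)] if and only if: (1) e is invariant under the conjugation action of GL_n(F), and (2) e·e_{n−1} = e_{n−1}, where e_{n−1} = [I_{n−1}] is the class of the diagonal idempotent matrix with 1's in the first n−1 diagonal entries and 0 elsewhere. -/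
/-- The idempotent diagonal matrix with `1`'s on the first `n-1` diagonal
entries and `0` elsewhere. -/
def Isub1 (F : Type) [Field F] (n : ℕ) : Matrix (Fin n) (Fin n) F :=
  Matrix.diagonal fun i => if (i : ℕ) < n - 1 then 1 else 0

namespace SingSpanProof

open Matrix

variable {K F : Type} [CommRing K] [Field F] {n : ℕ}

local notation "Mat" => Matrix (Fin n) (Fin n) F

/-- The transpose anti-automorphism on the monoid algebra, as a bare function. -/
noncomputable def tau (x : MonoidAlgebra K Mat) : MonoidAlgebra K Mat :=
  MonoidAlgebra.mapDomain Matrix.transpose x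

theorem tau_single (A : Mat) (a : K) :
    tau (MonoidAlgebra.single A a) = MonoidAlgebra.single Aᵀ a :=
  MonoidAlgebra.mapDomain_single

theorem tau_zero : tau (0 : MonoidAlgebra K Mat) = 0 :=
  MonoidAlgebra.mapDomain_zero _

theorem tau_add (x y : MonoidAlgebra K Mat) : tau (x + y) = tau x + tau y :=
  MonoidAlgebra.mapDomain_add _ _ _

theorem tau_smul (k : K) (x : MonoidAlgebra K Mat) : tau (k • x) = k • tau x :=
  MonoidAlgebra.mapDomain_smul _ k x

theorem tau_tau (x : MonoidAlgebra K Mat) : tau (tau x) = x := by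
  induction x using MonoidAlgebra.induction_linear with
  | zero => rw [tau_zero, tau_zero]
  | add f g hf hg => rw [tau_add, tau_add, hf, hg]
  | single a c => rw [tau_single, tau_single, Matrix.transpose_transpose]

theorem tau_mul_single (y : MonoidAlgebra K Mat) (B : Mat) (b : K) :
    tau (y * MonoidAlgebra.single B b) = MonoidAlgebra.single Bᵀ b * tau y := by
  induction y using MonoidAlgebra.induction_linear with
  | zero => rw [zero_mul, tau_zero, mul_zero]
  | add f g hf hg => rw [add_mul, tau_add, hf, hg, tau_add, mul_add]
  | single a c =>
      show tau (MonoidAlgebra.single a c * MonoidAlgebra.single B b) = _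
      rw [MonoidAlgebra.single_mul_single, tau_single, tau_single,
        MonoidAlgebra.single_mul_single, Matrix.transpose_mul, mul_comm b c]

theorem nonunit_mul_left (A B : Mat) (h : ¬ IsUnit A) : ¬ IsUnit (B * A) := by
  intro h'
  rw [Matrix.isUnit_iff_isUnit_det, Matrix.det_mul] at h'
  exact h ((Matrix.isUnit_iff_isUnit_det A).2 (isUnit_of_mul_isUnit_right h'))

theorem nonunit_mul_right (A B : Mat) (h : ¬ IsUnit A) : ¬ IsUnit (A * B) := by
  intro h'
  rw [Matrix.isUnit_iff_isUnit_det, Matrix.det_mul] at h'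
  exact h ((Matrix.isUnit_iff_isUnit_det A).2 (isUnit_of_mul_isUnit_left h'))

theorem mul_single_mem (A : Mat) (hA : ¬ IsUnit A) (y : MonoidAlgebra K Mat) :
    y * MonoidAlgebra.single A (1 : K) ∈ singSpan K F n := by
  induction y using MonoidAlgebra.induction_linear with
  | zero => rw [zero_mul]; exact zero_mem _
  | add f g hf hg => rw [add_mul]; exact add_mem hf hg
  | single B b =>
      show MonoidAlgebra.single B b * MonoidAlgebra.single A 1 ∈ _
      rw [MonoidAlgebra.single_mul_single]
      have hh : MonoidAlgebra.single (B * A) (b * 1) =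
          b • MonoidAlgebra.single (B * A) (1 : K) := by
        simp [MonoidAlgebra.smul_single']
      rw [hh]
      exact Submodule.smul_mem _ _
        (Submodule.subset_span ⟨B * A, nonunit_mul_left A B hA, rfl⟩)

theorem single_mul_mem (A : Mat) (hA : ¬ IsUnit A) (y : MonoidAlgebra K Mat) :
    MonoidAlgebra.single A (1 : K) * y ∈ singSpan K F n := by
  induction y using MonoidAlgebra.induction_linear with
  | zero => rw [mul_zero]; exact zero_mem _
  | add f g hf hg => rw [mul_add]; exact add_mem hf hg
  | single B b =>
      show MonoidAlgebra.single A 1 * MonoidAlgebra.single B b ∈ _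
      rw [MonoidAlgebra.single_mul_single]
      have hh : MonoidAlgebra.single (A * B) ((1 : K) * b) =
          b • MonoidAlgebra.single (A * B) (1 : K) := by
        simp [MonoidAlgebra.smul_single']
      rw [hh]
      exact Submodule.smul_mem _ _
        (Submodule.subset_span ⟨A * B, nonunit_mul_right A B hA, rfl⟩)

theorem tau_mem {x : MonoidAlgebra K Mat} (hx : x ∈ singSpan K F n) :
    tau x ∈ singSpan K F n := by
  induction hx using Submodule.span_induction with
  | mem x hx =>
      obtain ⟨A, hA, rfl⟩ := hx
      rw [tau_single]
      refine Submodule.subset_span ⟨Aᵀ, ?_, rfl⟩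
      intro h
      rw [Matrix.isUnit_iff_isUnit_det, Matrix.det_transpose] at h
      exact hA ((Matrix.isUnit_iff_isUnit_det A).2 h)
  | zero => rw [tau_zero]; exact zero_mem _
  | add x y hx hy hx' hy' => rw [tau_add]; exact add_mem hx' hy'
  | smul a x hx hx' => rw [tau_smul]; exact Submodule.smul_mem _ _ hx'

theorem mul_mem_left (y : MonoidAlgebra K Mat) {x : MonoidAlgebra K Mat}
    (hx : x ∈ singSpan K F n) : y * x ∈ singSpan K F n := by
  induction hx using Submodule.span_induction with
  | mem x hx => obtain ⟨A, hA, rfl⟩ := hx; exact mul_single_mem A hA y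
  | zero => rw [mul_zero]; exact zero_mem _
  | add a b _ _ ha hb => rw [mul_add]; exact add_mem ha hb
  | smul k a _ ha => rw [mul_smul_comm]; exact Submodule.smul_mem _ _ ha

theorem mem_mul_right (y : MonoidAlgebra K Mat) {x : MonoidAlgebra K Mat}
    (hx : x ∈ singSpan K F n) : x * y ∈ singSpan K F n := by
  induction hx using Submodule.span_induction with
  | mem x hx => obtain ⟨A, hA, rfl⟩ := hx; exact single_mul_mem A hA y
  | zero => rw [zero_mul]; exact zero_mem _
  | add a b _ _ ha hb => rw [add_mul]; exact add_mem ha hb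
  | smul k a _ ha => rw [smul_mul_assoc]; exact Submodule.smul_mem _ _ ha

/-- Key associativity juggling in a semigroup. -/
theorem sandwich {M : Type*} [Semigroup M] {e a b c : M} (ha : a * e = e * a)
    (hb : e * b = b) : e * (a * (b * c)) = a * (b * c) := by
  rw [← mul_assoc, ← ha, mul_assoc, ← mul_assoc e, hb]

/-- The diagonal idempotent with a single zero at position `i` is conjugate
(by an explicit permutation matrix) to `Isub1`. -/
theorem exists_conj_Isub1 {m : ℕ} (i : Fin (m + 1)) :
    ∃ P P' : Matrix (Fin (m + 1)) (Fin (m + 1)) F,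
      P * P' = 1 ∧ P' * P = 1 ∧
      P * Isub1 F (m + 1) * P' =
        Matrix.diagonal (fun k => if k = i then (0 : F) else 1) := by
  classical
  set σ : Equiv.Perm (Fin (m + 1)) := Equiv.swap (Fin.last m) i with hσ
  refine ⟨σ.permMatrix F, σ.permMatrix F, ?_, ?_, ?_⟩
  · rw [← PEquiv.toMatrix_trans, ← Equiv.toPEquiv_trans, Equiv.swap_swap,
      Equiv.toPEquiv_refl, PEquiv.toMatrix_refl]
  · rw [← PEquiv.toMatrix_trans, ← Equiv.toPEquiv_trans, Equiv.swap_swap,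
      Equiv.toPEquiv_refl, PEquiv.toMatrix_refl]
  · rw [PEquiv.toMatrix_toPEquiv_mul, PEquiv.mul_toMatrix_toPEquiv,
      Matrix.submatrix_submatrix, Isub1]
    have hsymm : σ.symm = σ := by rw [hσ, Equiv.symm_swap]
    rw [hsymm]
    have hcomp : ((σ : Fin (m+1) → Fin (m+1)) ∘ id) = σ := rfl
    have hcomp2 : (id ∘ (σ : Fin (m+1) → Fin (m+1))) = σ := rfl
    rw [hcomp, hcomp2, Matrix.submatrix_diagonal _ _ σ.injective]
    have hfun : ((fun j : Fin (m+1) => if (j : ℕ) < m + 1 - 1 then (1:F) else 0) ∘ σ) =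
        (fun k => if k = i then (0:F) else 1) := by
      funext k
      show (if ((σ k : Fin (m+1)) : ℕ) < m + 1 - 1 then (1:F) else 0) = _
      by_cases hk : k = i
      · subst hk
        have hkk : σ k = Fin.last m := by rw [hσ]; exact Equiv.swap_apply_right _ _
        rw [hkk]
        simp
      · by_cases hkl : k = Fin.last m
        · subst hkl
          have h1 : σ (Fin.last m) = i := by rw [hσ]; exact Equiv.swap_apply_left _ _
          have h2 : (i : ℕ) < m := Fin.val_lt_last (fun h => hk h.symm)
          rw [h1, if_neg hk]
          simp only [Nat.add_sub_cancel]
          rw [if_pos h2]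
        · have h1 : σ k = k := by
            rw [hσ]; exact Equiv.swap_apply_of_ne_of_ne hkl hk
          have h2 : (k : ℕ) < m := Fin.val_lt_last hkl
          rw [h1, if_neg hk]
          simp only [Nat.add_sub_cancel]
          rw [if_pos h2]
    rw [hfun]

/-- Every singular matrix factors as `Q⁻¹ * (E_i * B)` where `E_i` is the
diagonal idempotent with a zero at position `i`. -/
theorem exists_factor {m : ℕ} (A : Matrix (Fin (m + 1)) (Fin (m + 1)) F)
    (hA : ¬ IsUnit A) :
    ∃ (Q Q' B : Matrix (Fin (m + 1)) (Fin (m + 1)) F) (i : Fin (m + 1)),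
      Q * Q' = 1 ∧ Q' * Q = 1 ∧
      A = Q' * (Matrix.diagonal (fun k => if k = i then (0 : F) else 1) * B) := by
  classical
  have hdet : A.det = 0 := by
    by_contra hd
    exact hA ((Matrix.isUnit_iff_isUnit_det A).2 (isUnit_iff_ne_zero.2 hd))
  obtain ⟨v, hv0, hvA⟩ := Matrix.exists_vecMul_eq_zero_iff.mpr hdet
  obtain ⟨i, hvi⟩ := Function.ne_iff.mp hv0
  set Q : Matrix (Fin (m + 1)) (Fin (m + 1)) F := Matrix.updateRow 1 i v with hQ
  have hQdet : Q.det = v i := by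
    have h1 : Q = (Matrix.updateCol 1 i v)ᵀ := by
      rw [hQ, ← Matrix.updateRow_transpose, Matrix.transpose_one]
    rw [h1, Matrix.det_transpose, ← Matrix.cramer_apply, Matrix.cramer_one]
    rfl
  have hQu : IsUnit Q := by
    rw [Matrix.isUnit_iff_isUnit_det, hQdet]
    exact isUnit_iff_ne_zero.2 hvi
  obtain ⟨u, hu⟩ := hQu
  set B : Matrix (Fin (m + 1)) (Fin (m + 1)) F := Q * A with hB
  have hrow : ∀ j, B i j = 0 := by
    intro j
    have h2 : B i j = (v ᵥ* A) j := by
      rw [hB, Matrix.mul_apply]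
      show ∑ k, Q i k * A k j = dotProduct v fun k => A k j
      rw [dotProduct]
      congr 1
      funext k
      rw [hQ, Matrix.updateRow_self]
    rw [h2, hvA]
    rfl
  have hEB : Matrix.diagonal (fun k => if k = i then (0 : F) else 1) * B = B := by
    ext k j
    rw [Matrix.diagonal_mul]
    by_cases hk : k = i
    · subst hk; rw [hrow j, if_pos rfl, zero_mul]
    · rw [if_neg hk, one_mul]
  refine ⟨Q, ↑u⁻¹, B, i, ?_, ?_, ?_⟩
  · rw [← hu, Units.mul_inv]
  · rw [← hu, Units.inv_mul]
  · rw [hEB, hB, ← mul_assoc, ← hu, Units.inv_mul, one_mul]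

/-- The left-identity property on singular generators. -/
theorem leftId {m : ℕ} (e : MonoidAlgebra K (Matrix (Fin (m + 1)) (Fin (m + 1)) F))
    (hcomm : ∀ u : (Matrix (Fin (m + 1)) (Fin (m + 1)) F)ˣ,
      MonoidAlgebra.single (↑u : Matrix (Fin (m + 1)) (Fin (m + 1)) F) (1 : K) * e =
        e * MonoidAlgebra.single (↑u : Matrix (Fin (m + 1)) (Fin (m + 1)) F) 1)
    (hI : e * MonoidAlgebra.single (Isub1 F (m + 1)) (1 : K) =
      MonoidAlgebra.single (Isub1 F (m + 1)) 1)
    (A : Matrix (Fin (m + 1)) (Fin (m + 1)) F) (hA : ¬ IsUnit A) :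
    e * MonoidAlgebra.single A (1 : K) = MonoidAlgebra.single A 1 := by
  classical
  -- Step 1: `e` fixes each conjugated idempotent `E_i`.
  have hE : ∀ i : Fin (m + 1),
      e * MonoidAlgebra.single
        (Matrix.diagonal (fun k => if k = i then (0 : F) else 1)) (1 : K) =
      MonoidAlgebra.single
        (Matrix.diagonal (fun k => if k = i then (0 : F) else 1)) 1 := by
    intro i
    obtain ⟨P, P', h1, h2, h3⟩ := exists_conj_Isub1 (F := F) i
    have hsplit : MonoidAlgebra.single
        (Matrix.diagonal (fun k => if k = i then (0 : F) else 1)) (1 : K) =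
        MonoidAlgebra.single P 1 *
          (MonoidAlgebra.single (Isub1 F (m + 1)) 1 * MonoidAlgebra.single P' 1) := by
      rw [MonoidAlgebra.single_mul_single, MonoidAlgebra.single_mul_single,
        one_mul, one_mul, ← mul_assoc, h3]
    have hcu : MonoidAlgebra.single P (1 : K) * e = e * MonoidAlgebra.single P 1 :=
      hcomm ⟨P, P', h1, h2⟩
    rw [hsplit, sandwich hcu hI]
  -- Step 2: factor `A` and conclude.
  obtain ⟨Q, Q', B, i, h1, h2, h3⟩ := exists_factor A hA
  have hsplit : MonoidAlgebra.single A (1 : K) =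
      MonoidAlgebra.single Q' 1 *
        (MonoidAlgebra.single
          (Matrix.diagonal (fun k => if k = i then (0 : F) else 1)) 1 *
          MonoidAlgebra.single B 1) := by
    rw [MonoidAlgebra.single_mul_single, MonoidAlgebra.single_mul_single,
      one_mul, one_mul, ← h3]
  have hcu : MonoidAlgebra.single Q' (1 : K) * e = e * MonoidAlgebra.single Q' 1 :=
    hcomm ⟨Q', Q, h2, h1⟩
  rw [hsplit, sandwich hcu (hE i)]

end SingSpanProof

/-- An element `e ∈ K[Sing_n(F)]` is a two-sided unit for `K[Sing_n(F)]` iff it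
is invariant under the conjugation action of `GL_n(F)` and `e ⬝ [I_{n-1}] = [I_{n-1}]`. -/
theorem unit_of_singSpan_iff
    (K F : Type) [CommRing K] [Field F] [Fintype F] (n : ℕ) (hn : 0 < n)
    (e : MonoidAlgebra K (Matrix (Fin n) (Fin n) F))
    (he : e ∈ singSpan K F n) :
    (∀ x ∈ singSpan K F n, e * x = x ∧ x * e = x) ↔
      ((∀ g : GL (Fin n) F,
          MonoidAlgebra.single (g : Matrix (Fin n) (Fin n) F) (1 : K) * e *
            MonoidAlgebra.single ((g⁻¹ : GL (Fin n) F) : Matrix (Fin n) (Fin n) F) (1 : K)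
            = e) ∧
        e * MonoidAlgebra.single (Isub1 F n) (1 : K) =
          MonoidAlgebra.single (Isub1 F n) (1 : K)) := by
  obtain ⟨m, rfl⟩ : ∃ m, n = m + 1 := ⟨n - 1, (Nat.succ_pred_eq_of_pos hn).symm⟩
  have hIs : ¬ IsUnit (Isub1 F (m + 1)) := by
    rw [Matrix.isUnit_iff_isUnit_det, Isub1, Matrix.det_diagonal]
    have hz : ∏ i : Fin (m + 1), (if (i : ℕ) < m + 1 - 1 then (1 : F) else 0) = 0 :=
      Finset.prod_eq_zero (Finset.mem_univ (Fin.last m)) (by simp)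
    rw [hz]
    exact not_isUnit_zero
  have hImem : MonoidAlgebra.single (Isub1 F (m + 1)) (1 : K) ∈ singSpan K F (m + 1) :=
    Submodule.subset_span ⟨Isub1 F (m + 1), hIs, rfl⟩
  constructor
  · intro H
    constructor
    · intro g
      have hy : MonoidAlgebra.single ((g⁻¹ : GL (Fin (m+1)) F) : Matrix (Fin (m+1)) (Fin (m+1)) F) (1 : K) * e
          ∈ singSpan K F (m + 1) := SingSpanProof.mul_mem_left _ he
      have hx : MonoidAlgebra.single (g : Matrix (Fin (m+1)) (Fin (m+1)) F) (1 : K) * e *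
          MonoidAlgebra.single ((g⁻¹ : GL (Fin (m+1)) F) : Matrix (Fin (m+1)) (Fin (m+1)) F) (1 : K)
          ∈ singSpan K F (m + 1) :=
        SingSpanProof.mem_mul_right _ (SingSpanProof.mul_mem_left _ he)
      have h1 := (H _ hx).2
      have h2 := (H _ hy).1
      have key : (MonoidAlgebra.single (g : Matrix (Fin (m+1)) (Fin (m+1)) F) (1 : K) * e *
          MonoidAlgebra.single ((g⁻¹ : GL (Fin (m+1)) F) : Matrix (Fin (m+1)) (Fin (m+1)) F) (1 : K)) * e = e := by
        rw [mul_assoc, mul_assoc, h2, ← mul_assoc, MonoidAlgebra.single_mul_single, one_mul,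
          Units.mul_inv, ← MonoidAlgebra.one_def, one_mul]
      exact h1.symm.trans key
    · exact (H _ hImem).1
  · rintro ⟨Hinv, HI⟩
    have hcomm : ∀ u : (Matrix (Fin (m + 1)) (Fin (m + 1)) F)ˣ,
        MonoidAlgebra.single (↑u : Matrix (Fin (m + 1)) (Fin (m + 1)) F) (1 : K) * e =
          e * MonoidAlgebra.single (↑u : Matrix (Fin (m + 1)) (Fin (m + 1)) F) 1 := by
      intro u
      calc MonoidAlgebra.single (↑u : Matrix (Fin (m+1)) (Fin (m+1)) F) (1 : K) * e
          = MonoidAlgebra.single (↑u : Matrix (Fin (m+1)) (Fin (m+1)) F) (1 : K) * e * 1 := (mul_one _).symm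
        _ = MonoidAlgebra.single (↑u : Matrix (Fin (m+1)) (Fin (m+1)) F) (1 : K) * e *
            (MonoidAlgebra.single (↑u⁻¹ : Matrix (Fin (m+1)) (Fin (m+1)) F) (1 : K) *
              MonoidAlgebra.single (↑u : Matrix (Fin (m+1)) (Fin (m+1)) F) (1 : K)) := by
            rw [MonoidAlgebra.single_mul_single, one_mul, Units.inv_mul, ← MonoidAlgebra.one_def]
        _ = (MonoidAlgebra.single (↑u : Matrix (Fin (m+1)) (Fin (m+1)) F) (1 : K) * e *
            MonoidAlgebra.single (↑u⁻¹ : Matrix (Fin (m+1)) (Fin (m+1)) F) (1 : K)) *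
              MonoidAlgebra.single (↑u : Matrix (Fin (m+1)) (Fin (m+1)) F) (1 : K) :=
            (mul_assoc _ _ _).symm
        _ = e * MonoidAlgebra.single (↑u : Matrix (Fin (m+1)) (Fin (m+1)) F) (1 : K) := by
            rw [Hinv u]
    have hL : ∀ x ∈ singSpan K F (m + 1), e * x = x := by
      intro x hx
      induction hx using Submodule.span_induction with
      | mem x hx =>
          obtain ⟨A, hA, rfl⟩ := hx
          exact SingSpanProof.leftId e hcomm HI A hA
      | zero => rw [mul_zero]
      | add a b _ _ ha hb => rw [mul_add, ha, hb]
      | smul k a _ ha => rw [mul_smul_comm, ha]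
    have hfe : SingSpanProof.tau e ∈ singSpan K F (m + 1) := SingSpanProof.tau_mem he
    have hR : ∀ x ∈ singSpan K F (m + 1), x * SingSpanProof.tau e = x := by
      intro x hx
      induction hx using Submodule.span_induction with
      | mem x hx =>
          obtain ⟨A, hA, rfl⟩ := hx
          have hAT : ¬ IsUnit A.transpose := by
            intro h
            rw [Matrix.isUnit_iff_isUnit_det, Matrix.det_transpose] at h
            exact hA ((Matrix.isUnit_iff_isUnit_det A).2 h)
          have h3 : SingSpanProof.tau (e * MonoidAlgebra.single A.transpose (1 : K)) =
              MonoidAlgebra.single A 1 * SingSpanProof.tau e := by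
            rw [SingSpanProof.tau_mul_single, Matrix.transpose_transpose]
          have h4 : e * MonoidAlgebra.single A.transpose (1 : K) =
              MonoidAlgebra.single A.transpose 1 :=
            hL _ (Submodule.subset_span ⟨A.transpose, hAT, rfl⟩)
          rw [← h3, h4, SingSpanProof.tau_single, Matrix.transpose_transpose]
      | zero => rw [zero_mul]
      | add a b _ _ ha hb => rw [add_mul, ha, hb]
      | smul k a _ ha => rw [smul_mul_assoc, ha]
    have hef : e = SingSpanProof.tau e :=
      (hR e he).symm.trans (hL _ hfe)
    intro x hx
    refine ⟨hL x hx, ?_⟩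
    rw [hef]
    exact hR x hx
end

section
/- Every singular n×n matrix A over a field F can be written as A = BC where B is an idempotent matrix of rank n−1 (hence conjugate to the matrix I_{n−1} with 1's in the first n−1 diagonal entries and 0 elsewhere). -/
/-- Every singular `n × n` matrix `A` over a field factors as `A = B * C` where
`B` is an idempotent of rank `n - 1`, hence conjugate to `I_{n-1}`. -/
theorem singular_factors_through_corank_one_idempotent
    (F : Type) [Field F] (n : ℕ) (hn : 0 < n)
    (A : Matrix (Fin n) (Fin n) F) (hA : ¬ IsUnit A) :
    ∃ B C : Matrix (Fin n) (Fin n) F,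
      A = B * C ∧ B * B = B ∧ B.rank = n - 1 ∧
      ∃ g : GL (Fin n) F,
        (g : Matrix (Fin n) (Fin n) F) * Isub1 F n *
          ((g⁻¹ : GL (Fin n) F) : Matrix (Fin n) (Fin n) F) = B := by
  classical
  -- `A` has zero determinant
  have hdet : A.det = 0 := by
    by_contra h
    exact hA ((Matrix.isUnit_iff_isUnit_det A).mpr (isUnit_iff_ne_zero.mpr h))
  have hdetT : A.transpose.det = 0 := by rw [Matrix.det_transpose]; exact hdet
  obtain ⟨f, hf0, hfA⟩ := (Matrix.exists_mulVec_eq_zero_iff).mpr hdetT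
  have hvecMul : Matrix.vecMul f A = 0 := by rw [← Matrix.mulVec_transpose]; exact hfA
  obtain ⟨j, hj⟩ : ∃ j, f j ≠ 0 := by
    by_contra h
    push_neg at h
    exact hf0 (funext h)
  set last : Fin n := ⟨n - 1, by omega⟩ with hlast
  set σ : Equiv.Perm (Fin n) := Equiv.swap j last with hσ
  set M : Matrix (Fin n) (Fin n) F := (σ.permMatrix F).updateRow last f with hM
  -- the rows of the permutation matrix
  have hProw : ∀ k, (σ.permMatrix F) k = (Pi.single (σ k) (1 : F) : Fin n → F) := by
    intro k
    funext l
    simp [Equiv.Perm.permMatrix, PEquiv.toMatrix, Equiv.toPEquiv, Pi.single_apply, eq_comm]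
  -- `f` as a linear combination of the rows of the permutation matrix
  have hfsum : (∑ k, f (σ k) • (σ.permMatrix F) k) = f := by
    have h1 : (∑ k, f (σ k) • (σ.permMatrix F) k)
        = ∑ k, f (σ k) • (Pi.single (σ k) (1 : F) : Fin n → F) := by
      refine Finset.sum_congr rfl fun k _ => by rw [hProw]
    rw [h1]
    rw [Fintype.sum_equiv σ _ (fun k => f k • (Pi.single k (1 : F) : Fin n → F))
      (fun k => rfl)]
    funext l
    simp [Pi.single_apply, Finset.sum_ite_eq]
  have hσlast : σ last = j := by simp [hσ]
  have hMdet : IsUnit M.det := by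
    have h1 := Matrix.det_updateRow_sum (σ.permMatrix F) last (fun k => f (σ k))
    beta_reduce at h1
    rw [hfsum] at h1
    rw [hM, h1, hσlast, Matrix.det_permutation]
    rcases Int.units_eq_one_or (Equiv.Perm.sign σ) with h | h <;>
      · rw [h]
        simp [isUnit_iff_ne_zero, hj]
  obtain ⟨u, hu⟩ := (Matrix.isUnit_iff_isUnit_det M).mpr hMdet
  set U : Matrix (Fin n) (Fin n) F := (u : Matrix (Fin n) (Fin n) F) with hU
  set V : Matrix (Fin n) (Fin n) F := ((u⁻¹ : (Matrix (Fin n) (Fin n) F)ˣ) :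
    Matrix (Fin n) (Fin n) F) with hV
  have hVU : V * U = 1 := u.inv_mul
  have hUV : U * V = 1 := u.mul_inv
  -- the idempotent
  set B : Matrix (Fin n) (Fin n) F := V * Isub1 F n * U with hB
  have hudet : IsUnit U.det := (Matrix.isUnit_iff_isUnit_det _).mp u.isUnit
  have huinvdet : IsUnit V.det := (Matrix.isUnit_iff_isUnit_det _).mp u⁻¹.isUnit
  -- the last row of `M * A` vanishes
  have hMA : ∀ k, (M * A) last k = 0 := by
    intro k
    have h2 : (M * A) last k = Matrix.vecMul f A k := by
      rw [Matrix.mul_apply, Matrix.vecMul, dotProduct]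
      refine Finset.sum_congr rfl fun m _ => ?_
      rw [hM, Matrix.updateRow_self]
    rw [h2, hvecMul]
    rfl
  -- `Isub1` absorbs `M * A`
  have hI : Isub1 F n * (M * A) = M * A := by
    ext i k
    rw [Isub1, Matrix.diagonal_mul]
    by_cases h : (i : ℕ) < n - 1
    · rw [if_pos h, one_mul]
    · have hi : i = last := by
        apply Fin.ext
        have := i.isLt
        simp only [hlast]
        omega
      rw [if_neg h, zero_mul, hi, hMA]
  have hBA : B * A = A := by
    have h3 : B * A = V * (Isub1 F n * (M * A)) := by
      rw [hB, hu]
      noncomm_ring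
    rw [h3, hI, ← hu, ← Matrix.mul_assoc]
    rw [show V * (u : Matrix (Fin n) (Fin n) F) = V * U from rfl, hVU, Matrix.one_mul]
  -- idempotency of `Isub1`
  have hII : Isub1 F n * Isub1 F n = Isub1 F n := by
    rw [Isub1, Matrix.diagonal_mul_diagonal]
    refine congrArg Matrix.diagonal (funext fun i => ?_)
    by_cases h : (i : ℕ) < n - 1 <;> simp [h]
  refine ⟨B, A, hBA.symm, ?_, ?_, ?_⟩
  · -- B * B = B
    rw [hB]
    calc (V * Isub1 F n * U) * (V * Isub1 F n * U)
        = V * Isub1 F n * (U * V) * Isub1 F n * U := by noncomm_ring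
      _ = V * (Isub1 F n * Isub1 F n) * U := by rw [hUV]; noncomm_ring
      _ = V * Isub1 F n * U := by rw [hII, Matrix.mul_assoc]
  · -- rank
    rw [hB, Matrix.rank_mul_eq_left_of_isUnit_det _ _ hudet,
      Matrix.rank_mul_eq_right_of_isUnit_det _ _ huinvdet, Isub1, Matrix.rank_diagonal]
    have hcard : Fintype.card {i : Fin n // (i : ℕ) < n - 1} = n - 1 := by
      rw [Fintype.card_eq.mpr ⟨(⟨fun i => ⟨i.1, i.2⟩,
        fun (k : Fin (n - 1)) => ⟨⟨k.1, by omega⟩, k.2⟩, fun i => rfl, fun k => rfl⟩ :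
        {i : Fin n // (i : ℕ) < n - 1} ≃ Fin (n - 1))⟩, Fintype.card_fin]
    have e1 : {i : Fin n // (if (i : ℕ) < n - 1 then (1 : F) else 0) ≠ 0}
        ≃ {i : Fin n // (i : ℕ) < n - 1} :=
      Equiv.subtypeEquivRight (by intro i; by_cases h : (i : ℕ) < n - 1 <;> simp [h])
    rw [Fintype.card_congr e1]
    exact hcard
  · -- conjugation
    refine ⟨u⁻¹, ?_⟩
    rw [hB, inv_inv]
end

section
/- For a finite field F and any field (or commutative ring) K, composition of linear maps induces an isomorphism of K-modules ⊕_{k=0}^{n} K[Inj(F^k, V)] ⊗_{K[GL_k(F)]} K[Surj(F^n, F^k)] ≅ K[Hom(F^n, V)], for every finite dimensional F-vector space V. -/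
/-- The set of injective linear maps `F^k → V`. -/
def InjMaps (F V : Type) [Field F] [AddCommGroup V] [Module F V] (k : ℕ) :=
  {f : (Fin k → F) →ₗ[F] V // Function.Injective f}

/-- The set of surjective linear maps `F^n → F^k`. -/
def SurjMaps (F : Type) [Field F] (n k : ℕ) :=
  {g : (Fin n → F) →ₗ[F] (Fin k → F) // Function.Surjective g}

/-- The relation identifying `(f ∘ σ, σ⁻¹ ∘ g)` with `(f, g)` for
`σ ∈ GL_k(F)`; the quotient by it realizes `K[Inj] ⊗_{K[GL_k]} K[Surj]`
(both factors being free `K[GL_k(F)]`-modules). -/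
def glRel (F V : Type) [Field F] [AddCommGroup V] [Module F V] (n k : ℕ)
    (x y : InjMaps F V k × SurjMaps F n k) : Prop :=
  ∃ σ : (Fin k → F) ≃ₗ[F] (Fin k → F),
    y.1.1 = x.1.1 ∘ₗ (σ : (Fin k → F) →ₗ[F] (Fin k → F)) ∧
    y.2.1 = (σ.symm : (Fin k → F) →ₗ[F] (Fin k → F)) ∘ₗ x.2.1

theorem comp_respects_glRel (F V : Type) [Field F] [AddCommGroup V] [Module F V]
    (n k : ℕ) (x y : InjMaps F V k × SurjMaps F n k) (h : glRel F V n k x y) :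
    x.1.1 ∘ₗ x.2.1 = y.1.1 ∘ₗ y.2.1 := by
  obtain ⟨σ, h1, h2⟩ := h
  rw [h1, h2]
  ext v
  simp

/-- Composition of linear maps, descended to the quotients by the `GL_k(F)`
actions. -/
def compDesc (F V : Type) [Field F] [AddCommGroup V] [Module F V] (n : ℕ)
    (p : Σ k : Fin (n + 1), Quot (glRel F V n k)) : (Fin n → F) →ₗ[F] V :=
  Quot.lift (fun x => x.1.1 ∘ₗ x.2.1)
    (fun a b h => comp_respects_glRel F V n p.1 a b h) p.2

open Module LinearMap Function

theorem compDesc_bijective (F V : Type) [Field F] [AddCommGroup V] [Module F V]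
    [FiniteDimensional F V] (n : ℕ) : Function.Bijective (compDesc F V n) := by
  constructor
  · rintro ⟨k1, q1⟩ ⟨k2, q2⟩
    induction q1 using Quot.ind with | _ a => ?_
    induction q2 using Quot.ind with | _ b => ?_
    intro h
    change a.1.1 ∘ₗ a.2.1 = b.1.1 ∘ₗ b.2.1 at h
    have hr : range a.1.1 = range b.1.1 := by
      have hh : range (a.1.1 ∘ₗ a.2.1) = range (b.1.1 ∘ₗ b.2.1) := by rw [h]
      rwa [range_comp, range_comp, range_eq_top.mpr a.2.2, range_eq_top.mpr b.2.2,
        Submodule.map_top, Submodule.map_top] at hh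
    have hk : k1 = k2 := by
      have h1 : finrank F (range a.1.1) = (k1 : ℕ) := by
        rw [finrank_range_of_inj a.1.2, finrank_fin_fun]
      have h2 : finrank F (range b.1.1) = (k2 : ℕ) := by
        rw [finrank_range_of_inj b.1.2, finrank_fin_fun]
      exact Fin.ext (by rw [← h1, ← h2, hr])
    subst hk
    congr 1
    let e1 := LinearEquiv.ofInjective a.1.1 a.1.2
    let e2 := LinearEquiv.ofInjective b.1.1 b.1.2
    let σ := e2 ≪≫ₗ (LinearEquiv.ofEq _ _ hr.symm) ≪≫ₗ e1.symm
    have key : a.1.1 ∘ₗ (σ : (Fin (k1:ℕ) → F) →ₗ[F] (Fin (k1:ℕ) → F)) = b.1.1 := by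
      apply LinearMap.ext; intro x
      have : a.1.1 (σ x) = ((e1 (σ x) : range a.1.1) : V) := by
        simp [e1, LinearEquiv.ofInjective_apply]
      rw [LinearMap.comp_apply, LinearEquiv.coe_coe, this]
      simp [σ, LinearEquiv.coe_ofEq_apply, e2, LinearEquiv.ofInjective_apply]
    apply Quot.sound
    refine ⟨σ, key.symm, ?_⟩
    apply LinearMap.ext; intro v
    rw [LinearMap.comp_apply, LinearEquiv.coe_coe, LinearEquiv.eq_symm_apply]
    apply a.1.2
    have h1 := DFunLike.congr_fun key (b.2.1 v)
    have h2 := DFunLike.congr_fun h v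
    simp only [LinearMap.comp_apply, LinearEquiv.coe_coe] at h1 h2
    rw [h1, ← h2]
  · intro h
    set S := range h with hS
    set k := finrank F S with hkdef
    have hk : k < n + 1 :=
      Nat.lt_succ_of_le (h.finrank_range_le.trans_eq (finrank_fin_fun F))
    let e : S ≃ₗ[F] (Fin k → F) := (Module.finBasis F S).equivFun
    let f : (Fin k → F) →ₗ[F] V := S.subtype ∘ₗ (e.symm : (Fin k → F) →ₗ[F] S)
    have hf : Injective f := by
      intro x y hxy
      exact e.symm.injective (S.injective_subtype hxy)
    let g : (Fin n → F) →ₗ[F] (Fin k → F) := (e : S →ₗ[F] (Fin k → F)) ∘ₗ h.rangeRestrict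
    have hg : Surjective g := e.surjective.comp h.surjective_rangeRestrict
    refine ⟨⟨⟨k, hk⟩, Quot.mk _ (⟨f, hf⟩, ⟨g, hg⟩)⟩, ?_⟩
    show f ∘ₗ g = h
    apply LinearMap.ext; intro v
    simp [f, g]

/-- Composition induces an isomorphism of `K`-modules
`⊕_{k=0}^n K[Inj(F^k,V)] ⊗_{K[GL_k(F)]} K[Surj(F^n,F^k)] ≅ K[Hom(F^n,V)]`. -/
theorem composition_induces_iso
    (K F V : Type) [CommRing K] [Field F] [Fintype F]
    [AddCommGroup V] [Module F V] [FiniteDimensional F V] (n : ℕ) :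
    Function.Bijective
      (Finsupp.lmapDomain K K (compDesc F V n) :
        ((Σ k : Fin (n + 1), Quot (glRel F V n k)) →₀ K) →ₗ[K]
          (((Fin n → F) →ₗ[F] V) →₀ K)) := by
  have hb := compDesc_bijective F V n
  have hcoe : ⇑(Finsupp.lmapDomain K K (compDesc F V n) :
      ((Σ k : Fin (n + 1), Quot (glRel F V n k)) →₀ K) →ₗ[K]
        (((Fin n → F) →ₗ[F] V) →₀ K)) = Finsupp.mapDomain (compDesc F V n) := by
    funext l; exact Finsupp.lmapDomain_apply K K _ l
  rw [hcoe]
  constructor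
  · exact Finsupp.mapDomain_injective hb.1
  · intro g
    refine ⟨Finsupp.mapDomain (Equiv.ofBijective _ hb).symm g, ?_⟩
    rw [← Finsupp.mapDomain_comp]
    have : compDesc F V n ∘ (Equiv.ofBijective _ hb).symm = id := by
      funext x
      exact (Equiv.ofBijective _ hb).apply_symm_apply x
    rw [this, Finsupp.mapDomain_id]
end

section
/- For every commutative ring K and every n ≥ 0, there is an isomorphism of K-algebras K[R_n] ≅ ∏_{k=0}^{n} M_{C(n,k)}(K[Σ_k]), where R_n is the rook monoid (the symmetric inverse semigroup of partial injections of an n-element set), C(n,k) is the binomial coefficient, and Σ_k is the symmetric group on k letters. -/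
/-- The rook monoid `R_n`: partial injections of an `n`-element set, realized
as the monoid of endomorphisms of the pointed set `Option (Fin n)` which
preserve the basepoint `none` and are injective away from the preimage of the
basepoint. -/
def rookMonoid (n : ℕ) : Submonoid (Function.End (Option (Fin n))) where
  carrier := {f | f none = none ∧ ∀ a b, f a = f b → f a ≠ none → a = b}
  one_mem' := ⟨rfl, fun a b h _ => h⟩
  mul_mem' := by
    rintro f g ⟨hf0, hf⟩ ⟨hg0, hg⟩
    refine ⟨by show f (g none) = none; rw [hg0, hf0], ?_⟩
    intro a b h hne
    have hga : g a ≠ none := by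
      intro h'
      apply hne
      show f (g a) = none
      rw [h', hf0]
    have : g a = g b := hf (g a) (g b) h hne
    exact hg a b this hga

noncomputable section

open Finset

open scoped Classical

namespace RookAux

variable {n : ℕ}

lemma apply_none (u : rookMonoid n) : u.1 none = none := u.2.1

lemma mul_apply (u v : rookMonoid n) (x : Option (Fin n)) :
    (u * v).1 x = u.1 (v.1 x) := rfl

lemma one_apply (x : Option (Fin n)) : (1 : rookMonoid n).1 x = x := rfl

/-- domain -/
def dm (u : rookMonoid n) : Finset (Fin n) :=
  Finset.univ.filter fun a => u.1 (some a) ≠ none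

/-- range -/
def rn (u : rookMonoid n) : Finset (Fin n) :=
  Finset.univ.filter fun b => ∃ a, u.1 (some a) = some b

lemma mem_dm {u : rookMonoid n} {a} : a ∈ dm u ↔ u.1 (some a) ≠ none := by simp [dm]

lemma mem_rn {u : rookMonoid n} {b} : b ∈ rn u ↔ ∃ a, u.1 (some a) = some b := by simp [rn]

lemma inj_on (u : rookMonoid n) {a b : Fin n} (h : u.1 (some a) = u.1 (some b))
    (hne : u.1 (some a) ≠ none) : a = b := by
  have := u.2.2 (some a) (some b) h hne
  exact Option.some_injective _ this

lemma card_rn (u : rookMonoid n) : (rn u).card = (dm u).card := by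
  symm
  apply Finset.card_bij
    (fun a ha => (u.1 (some a)).get (Option.isSome_iff_ne_none.2 (mem_dm.1 ha)))
  · intro a ha; exact mem_rn.2 ⟨a, (Option.some_get _).symm⟩
  · intro a ha a' ha' h
    apply inj_on u _ (mem_dm.1 ha)
    rw [← Option.some_get (Option.isSome_iff_ne_none.2 (mem_dm.1 ha)),
      ← Option.some_get (Option.isSome_iff_ne_none.2 (mem_dm.1 ha')), h]
  · intro b hb
    obtain ⟨a, ha⟩ := mem_rn.1 hb
    refine ⟨a, mem_dm.2 (by simp [ha]), ?_⟩
    simp [ha]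

lemma ext_rook {u v : rookMonoid n} (h : ∀ a : Fin n, u.1 (some a) = v.1 (some a)) : u = v := by
  apply Subtype.ext
  funext x
  cases x with
  | none => rw [apply_none, apply_none]
  | some a => exact h a

/-- restriction of `u` to `T` -/
def restr (u : rookMonoid n) (T : Finset (Fin n)) : rookMonoid n :=
  ⟨fun x => x.bind fun a => if a ∈ T then u.1 (some a) else none, by
    constructor
    · rfl
    · intro x y h hne
      match x, y with
      | none, _ => simp at hne
      | some a, none =>
        simp only [Option.bind_some, Option.bind_none] at h hne
        exact absurd h hne
      | some a, some b =>
        simp only [Option.bind_some] at h hne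
        by_cases haT : a ∈ T
        · rw [if_pos haT] at h hne
          by_cases hbT : b ∈ T
          · rw [if_pos hbT] at h
            exact congrArg some (inj_on u h hne)
          · rw [if_neg hbT] at h
            exact absurd h hne
        · rw [if_neg haT] at hne
          exact absurd rfl hne⟩

lemma restr_apply (u : rookMonoid n) (T : Finset (Fin n)) (a : Fin n) :
    (restr u T).1 (some a) = if a ∈ T then u.1 (some a) else none := rfl

lemma dm_restr {u : rookMonoid n} {T : Finset (Fin n)} (hT : T ⊆ dm u) :
    dm (restr u T) = T := by
  ext a
  rw [mem_dm, restr_apply]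
  constructor
  · intro h
    by_contra haT
    rw [if_neg haT] at h
    exact h rfl
  · intro haT
    rw [if_pos haT]
    exact mem_dm.1 (hT haT)

lemma restr_dm (u : rookMonoid n) : restr u (dm u) = u := by
  apply ext_rook
  intro a
  rw [restr_apply]
  by_cases h : a ∈ dm u
  · rw [if_pos h]
  · rw [if_neg h]
    have h2 : u.1 (some a) = none := by
      by_contra h'
      exact h (mem_dm.2 h')
    exact h2.symm

lemma restr_restr (u : rookMonoid n) {T W : Finset (Fin n)} (h : W ⊆ T) :
    restr (restr u T) W = restr u W := by
  apply ext_rook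
  intro a
  rw [restr_apply, restr_apply, restr_apply]
  by_cases hW : a ∈ W
  · rw [if_pos hW, if_pos hW, if_pos (h hW)]
  · rw [if_neg hW, if_neg hW]

end RookAux
namespace RookAux

variable {n : ℕ}

/-- rank as element of `Fin (n+1)` -/
def rkF (u : rookMonoid n) : Fin (n + 1) :=
  ⟨(dm u).card, Nat.lt_succ_of_le (le_trans (Finset.card_le_card (Finset.subset_univ _))
    (le_of_eq (by rw [Finset.card_univ, Fintype.card_fin])))⟩

attribute [reducible] rkF

/-- indexing of `k`-subsets by `Fin (n.choose k)` -/
def subEquiv (k : Fin (n + 1)) : {s : Finset (Fin n) // s.card = (k : ℕ)} ≃ Fin (n.choose k) :=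
  Fintype.equivFinOfCardEq (by rw [Fintype.card_finset_len, Fintype.card_fin])

lemma oio_congr {A A' : Finset (Fin n)} (h : A = A') {c c' : ℕ} (hA : A.card = c)
    (hA' : A'.card = c') {x : Fin c} {x' : Fin c'} (hx : (x : ℕ) = (x' : ℕ)) :
    ((A.orderIsoOfFin hA x : {a // a ∈ A}) : Fin n) =
      ((A'.orderIsoOfFin hA' x' : {a // a ∈ A'}) : Fin n) := by
  subst h; subst hA; subst hA'
  cases Fin.ext hx
  rfl

lemma oio_inj {A A' : Finset (Fin n)} (h : A = A') {c c' : ℕ} (hA : A.card = c)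
    (hA' : A'.card = c') {x : Fin c} {x' : Fin c'}
    (hv : ((A.orderIsoOfFin hA x : {a // a ∈ A}) : Fin n) =
      ((A'.orderIsoOfFin hA' x' : {a // a ∈ A'}) : Fin n)) : (x : ℕ) = (x' : ℕ) := by
  subst h; subst hA; subst hA'
  have h2 : A.orderIsoOfFin rfl x = A.orderIsoOfFin rfl x' := Subtype.ext hv
  rw [(A.orderIsoOfFin rfl).injective h2]

lemma subEquiv_val_congr {k k' : Fin (n + 1)} (h : k = k') (X : {s : Finset (Fin n) // s.card = (k : ℕ)})
    (X' : {s : Finset (Fin n) // s.card = (k' : ℕ)}) (hX : X.1 = X'.1) :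
    ((subEquiv k X : ℕ)) = ((subEquiv k' X' : ℕ)) := by
  subst h; rw [Subtype.ext hX]

lemma subEquiv_heq {k k' : Fin (n + 1)} (h : k = k') (X : {s : Finset (Fin n) // s.card = (k : ℕ)})
    (X' : {s : Finset (Fin n) // s.card = (k' : ℕ)}) (hX : X.1 = X'.1) :
    HEq (subEquiv k X) (subEquiv k' X') := by
  subst h; rw [Subtype.ext hX]

/-- the value of `u` at `a ∈ dm u` -/
def outVal (u : rookMonoid n) (a : Fin n) (ha : a ∈ dm u) : Fin n :=
  (u.1 (some a)).get (Option.isSome_iff_ne_none.2 (mem_dm.1 ha))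

lemma some_outVal (u : rookMonoid n) (a : Fin n) (ha : a ∈ dm u) :
    u.1 (some a) = some (outVal u a ha) := (Option.some_get _).symm

lemma outVal_mem (u : rookMonoid n) (a : Fin n) (ha : a ∈ dm u) : outVal u a ha ∈ rn u :=
  mem_rn.2 ⟨a, some_outVal u a ha⟩

/-- the permutation associated to a partial injection -/
def permF (u : rookMonoid n) : Equiv.Perm (Fin (dm u).card) :=
  Equiv.ofBijective
    (fun x => ((rn u).orderIsoOfFin (card_rn u)).symm
      ⟨outVal u _ ((dm u).orderIsoOfFin rfl x).2, outVal_mem u _ _⟩)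
    (Finite.injective_iff_bijective.1 (by
      intro x y hxy
      have h1 := ((rn u).orderIsoOfFin (card_rn u)).symm.injective hxy
      have h2 : outVal u _ ((dm u).orderIsoOfFin rfl x).2 =
          outVal u _ ((dm u).orderIsoOfFin rfl y).2 := congrArg Subtype.val h1
      have h3 : u.1 (some ((dm u).orderIsoOfFin rfl x : Fin n)) =
          u.1 (some ((dm u).orderIsoOfFin rfl y : Fin n)) := by
        rw [some_outVal u _ ((dm u).orderIsoOfFin rfl x).2,
          some_outVal u _ ((dm u).orderIsoOfFin rfl y).2, h2]
      have h4 := inj_on u h3 (mem_dm.1 ((dm u).orderIsoOfFin rfl x).2)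
      exact ((dm u).orderIsoOfFin rfl).injective (Subtype.ext h4)))

lemma permF_spec (u : rookMonoid n) (x : Fin (dm u).card) :
    u.1 (some ((dm u).orderIsoOfFin rfl x : Fin n)) =
      some (((rn u).orderIsoOfFin (card_rn u) (permF u x) : {a // a ∈ rn u}) : Fin n) := by
  have key : ((rn u).orderIsoOfFin (card_rn u) (permF u x) : {a // a ∈ rn u}) =
      ⟨outVal u (((dm u).orderIsoOfFin rfl x : {a // a ∈ dm u}) : Fin n)
        ((dm u).orderIsoOfFin rfl x).2,
       outVal_mem u (((dm u).orderIsoOfFin rfl x : {a // a ∈ dm u}) : Fin n)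
        ((dm u).orderIsoOfFin rfl x).2⟩ :=
    OrderIso.apply_symm_apply ((rn u).orderIsoOfFin (card_rn u)) _
  rw [key]
  exact some_outVal u _ ((dm u).orderIsoOfFin rfl x).2

lemma permF_uniq (u : rookMonoid n) (x y : Fin (dm u).card)
    (h : u.1 (some ((dm u).orderIsoOfFin rfl x : Fin n)) =
      some (((rn u).orderIsoOfFin (card_rn u) y : {a // a ∈ rn u}) : Fin n)) : permF u x = y := by
  have h2 := (permF_spec u x).symm.trans h
  have h3 := Option.some_injective _ h2
  exact ((rn u).orderIsoOfFin (card_rn u)).injective (Subtype.ext h3)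

/-- the rook element with range `B`, domain `A`, permutation `σ` -/
def mk (k : Fin (n + 1)) (B A : {s : Finset (Fin n) // s.card = (k : ℕ)})
    (σ : Equiv.Perm (Fin (k : ℕ))) : rookMonoid n :=
  ⟨fun x => x.bind fun a =>
    if h : a ∈ A.1 then
      some ((B.1.orderIsoOfFin B.2 (σ ((A.1.orderIsoOfFin A.2).symm ⟨a, h⟩)) : {x // x ∈ B.1}) : Fin n)
    else none, by
    constructor
    · rfl
    · intro x y h hne
      match x, y with
      | none, _ => simp at hne
      | some a, none =>
        simp only [Option.bind_some, Option.bind_none] at h hne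
        exact absurd h hne
      | some a, some b =>
        simp only [Option.bind_some] at h hne
        by_cases haA : a ∈ A.1
        · rw [dif_pos haA] at h hne
          by_cases hbA : b ∈ A.1
          · rw [dif_pos hbA] at h
            have h1 := Option.some_injective _ h
            have h2 := (B.1.orderIsoOfFin B.2).injective (Subtype.ext h1)
            have h3 := σ.injective h2
            have h4 := (A.1.orderIsoOfFin A.2).symm.injective h3
            exact congrArg some (congrArg Subtype.val h4)
          · rw [dif_neg hbA] at h
            exact absurd h hne
        · rw [dif_neg haA] at hne
          exact absurd rfl hne⟩

lemma mk_apply_of_mem (k : Fin (n + 1)) (B A : {s : Finset (Fin n) // s.card = (k : ℕ)})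
    (σ : Equiv.Perm (Fin (k : ℕ))) {a : Fin n} (h : a ∈ A.1) :
    (mk k B A σ).1 (some a) =
      some ((B.1.orderIsoOfFin B.2 (σ ((A.1.orderIsoOfFin A.2).symm ⟨a, h⟩)) : {x // x ∈ B.1}) : Fin n) := by
  show (if h : a ∈ A.1 then _ else none) = _
  rw [dif_pos h]

lemma mk_apply_of_not_mem (k : Fin (n + 1)) (B A : {s : Finset (Fin n) // s.card = (k : ℕ)})
    (σ : Equiv.Perm (Fin (k : ℕ))) {a : Fin n} (h : a ∉ A.1) :
    (mk k B A σ).1 (some a) = none := by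
  show (if h : a ∈ A.1 then _ else none) = none
  rw [dif_neg h]

lemma mk_apply_oio (k : Fin (n + 1)) (B A : {s : Finset (Fin n) // s.card = (k : ℕ)})
    (σ : Equiv.Perm (Fin (k : ℕ))) (y : Fin (k : ℕ)) :
    (mk k B A σ).1 (some ((A.1.orderIsoOfFin A.2 y : {x // x ∈ A.1}) : Fin n)) =
      some ((B.1.orderIsoOfFin B.2 (σ y) : {x // x ∈ B.1}) : Fin n) := by
  rw [mk_apply_of_mem k B A σ (A.1.orderIsoOfFin A.2 y).2]
  congr 2
  have : (⟨((A.1.orderIsoOfFin A.2 y : {x // x ∈ A.1}) : Fin n), (A.1.orderIsoOfFin A.2 y).2⟩ :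
      {x // x ∈ A.1}) = A.1.orderIsoOfFin A.2 y := Subtype.ext rfl
  rw [this, OrderIso.symm_apply_apply]

lemma dm_mk (k : Fin (n + 1)) (B A : {s : Finset (Fin n) // s.card = (k : ℕ)})
    (σ : Equiv.Perm (Fin (k : ℕ))) : dm (mk k B A σ) = A.1 := by
  ext a
  rw [mem_dm]
  constructor
  · intro h
    by_contra haA
    rw [mk_apply_of_not_mem k B A σ haA] at h
    exact h rfl
  · intro haA
    rw [mk_apply_of_mem k B A σ haA]
    simp

lemma rn_mk (k : Fin (n + 1)) (B A : {s : Finset (Fin n) // s.card = (k : ℕ)})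
    (σ : Equiv.Perm (Fin (k : ℕ))) : rn (mk k B A σ) = B.1 := by
  ext b
  rw [mem_rn]
  constructor
  · rintro ⟨a, ha⟩
    by_cases haA : a ∈ A.1
    · rw [mk_apply_of_mem k B A σ haA] at ha
      have := Option.some_injective _ ha
      rw [← this]
      exact (B.1.orderIsoOfFin B.2 _).2
    · rw [mk_apply_of_not_mem k B A σ haA] at ha
      exact absurd ha (by simp)
  · intro hb
    refine ⟨((A.1.orderIsoOfFin A.2 (σ.symm ((B.1.orderIsoOfFin B.2).symm ⟨b, hb⟩)) :
      {x // x ∈ A.1}) : Fin n), ?_⟩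
    rw [mk_apply_oio]
    rw [Equiv.apply_symm_apply, OrderIso.apply_symm_apply]

lemma mk_self (u : rookMonoid n) :
    mk (rkF u) ⟨rn u, card_rn u⟩ ⟨dm u, rfl⟩ (permF u) = u := by
  apply ext_rook
  intro a
  by_cases ha : a ∈ dm u
  · have h1 := mk_apply_of_mem (rkF u) ⟨rn u, card_rn u⟩ ⟨dm u, rfl⟩ (permF u)
      (show a ∈ dm u from ha)
    have h2 := permF_spec u (((dm u).orderIsoOfFin rfl).symm ⟨a, ha⟩)
    rw [OrderIso.apply_symm_apply] at h2
    exact h1.trans h2.symm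
  · refine (mk_apply_of_not_mem (rkF u) ⟨rn u, card_rn u⟩ ⟨dm u, rfl⟩ (permF u) (show a ∉ dm u from ha)).trans ?_
    symm
    by_contra h'
    exact ha (mem_dm.2 h')

lemma permF_mk (k : Fin (n + 1)) (B A : {s : Finset (Fin n) // s.card = (k : ℕ)})
    (σ : Equiv.Perm (Fin (k : ℕ))) (m : ℕ) (h1 : m < (dm (mk k B A σ)).card) (h2 : m < (k : ℕ)) :
    ((permF (mk k B A σ) ⟨m, h1⟩ : Fin (dm (mk k B A σ)).card) : ℕ) =
      ((σ ⟨m, h2⟩ : Fin (k : ℕ)) : ℕ) := by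
  set u := mk k B A σ with hu
  have hdm : dm u = A.1 := dm_mk k B A σ
  have hrn : rn u = B.1 := rn_mk k B A σ
  have ha : ((dm u).orderIsoOfFin rfl ⟨m, h1⟩ : Fin n) =
      ((A.1.orderIsoOfFin A.2 ⟨m, h2⟩ : {x // x ∈ A.1}) : Fin n) :=
    oio_congr hdm rfl A.2 rfl
  have h3 : u.1 (some ((dm u).orderIsoOfFin rfl ⟨m, h1⟩ : Fin n)) =
      some ((B.1.orderIsoOfFin B.2 (σ ⟨m, h2⟩) : {x // x ∈ B.1}) : Fin n) := by
    rw [ha]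
    exact mk_apply_oio k B A σ ⟨m, h2⟩
  have h4 := (permF_spec u ⟨m, h1⟩).symm.trans h3
  have h5 := Option.some_injective _ h4
  exact oio_inj hrn (card_rn u) B.2 h5

end RookAux
namespace RookAux

variable {n : ℕ}

section mulfacts

lemma mem_dm_mul {u v : rookMonoid n} {a : Fin n} :
    a ∈ dm (u * v) ↔ ∃ b, v.1 (some a) = some b ∧ b ∈ dm u := by
  rw [mem_dm, mul_apply]
  constructor
  · intro h
    match hv : v.1 (some a) with
    | none => rw [hv, apply_none] at h; exact absurd rfl h
    | some b => rw [hv] at h; exact ⟨b, rfl, mem_dm.2 h⟩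
  · rintro ⟨b, hb, hbu⟩
    rw [hb]
    exact mem_dm.1 hbu

lemma dm_mul_subset (u v : rookMonoid n) : dm (u * v) ⊆ dm v := by
  intro a ha
  obtain ⟨b, hb, _⟩ := mem_dm_mul.1 ha
  exact mem_dm.2 (by rw [hb]; simp)

lemma dm_mul_eq (u v : rookMonoid n) (h : dm u = rn v) : dm (u * v) = dm v := by
  apply Finset.Subset.antisymm (dm_mul_subset u v)
  intro a ha
  obtain ⟨b, hb⟩ : ∃ b, v.1 (some a) = some b :=
    Option.ne_none_iff_exists'.1 (mem_dm.1 ha)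
  exact mem_dm_mul.2 ⟨b, hb, h ▸ mem_rn.2 ⟨a, hb⟩⟩

lemma rn_mul_eq (u v : rookMonoid n) (h : dm u = rn v) : rn (u * v) = rn u := by
  ext b
  rw [mem_rn, mem_rn]
  constructor
  · rintro ⟨a, ha⟩
    rw [mul_apply] at ha
    match hv : v.1 (some a) with
    | none => rw [hv, apply_none] at ha; exact absurd ha (by simp)
    | some c => rw [hv] at ha; exact ⟨c, ha⟩
  · rintro ⟨c, hc⟩
    have hcd : c ∈ dm u := mem_dm.2 (by rw [hc]; simp)
    obtain ⟨a, ha⟩ := mem_rn.1 (h ▸ hcd)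
    exact ⟨a, by rw [mul_apply, ha, hc]⟩

lemma mem_rn_restr {v : rookMonoid n} {T : Finset (Fin n)} {b : Fin n} :
    b ∈ rn (restr v T) ↔ ∃ a ∈ T, v.1 (some a) = some b := by
  rw [mem_rn]
  constructor
  · rintro ⟨a, ha⟩
    rw [restr_apply] at ha
    by_cases haT : a ∈ T
    · rw [if_pos haT] at ha; exact ⟨a, haT, ha⟩
    · rw [if_neg haT] at ha; exact absurd ha (by simp)
  · rintro ⟨a, haT, ha⟩
    exact ⟨a, by rw [restr_apply, if_pos haT]; exact ha⟩

lemma restr_mul (s t : rookMonoid n) {T : Finset (Fin n)} (hT : T ⊆ dm (s * t)) :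
    restr s (rn (restr t T)) * restr t T = restr (s * t) T := by
  apply ext_rook
  intro a
  rw [mul_apply, restr_apply, restr_apply]
  by_cases haT : a ∈ T
  · rw [if_pos haT, if_pos haT]
    obtain ⟨b, hb, hbu⟩ := mem_dm_mul.1 (hT haT)
    rw [hb, restr_apply, if_pos (mem_rn_restr.2 ⟨a, haT, hb⟩), mul_apply, hb]
  · rw [if_neg haT, if_neg haT, apply_none]

lemma rn_restr_subset_iff (s t : rookMonoid n) {T : Finset (Fin n)} (hT : T ⊆ dm t) :
    rn (restr t T) ⊆ dm s ↔ T ⊆ dm (s * t) := by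
  constructor
  · intro hsub a haT
    obtain ⟨b, hb⟩ : ∃ b, t.1 (some a) = some b :=
      Option.ne_none_iff_exists'.1 (mem_dm.1 (hT haT))
    exact mem_dm_mul.2 ⟨b, hb, hsub (mem_rn_restr.2 ⟨a, haT, hb⟩)⟩
  · intro hsub b hb
    obtain ⟨a, haT, ha⟩ := mem_rn_restr.1 hb
    obtain ⟨c, hc, hcu⟩ := mem_dm_mul.1 (hsub haT)
    rw [ha] at hc
    rw [Option.some_injective _ hc]
    exact hcu

end mulfacts

variable (K : Type) [CommRing K]

/-- the target algebra -/
abbrev Tgt (n : ℕ) : Type :=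
  ∀ k : Fin (n + 1),
    Matrix (Fin (n.choose k)) (Fin (n.choose k)) (MonoidAlgebra K (Equiv.Perm (Fin (k : ℕ))))

def iIdx (u : rookMonoid n) : Fin (n.choose (rkF u)) := subEquiv (rkF u) ⟨rn u, card_rn u⟩

def jIdx (u : rookMonoid n) : Fin (n.choose (rkF u)) := subEquiv (rkF u) ⟨dm u, rfl⟩

/-- basis element of the target attached to a rook element -/
def el (u : rookMonoid n) : Tgt K n :=
  Pi.single (rkF u)
    (Matrix.single (iIdx u) (jIdx u) (MonoidAlgebra.single (permF u) 1))

lemma piSingle_congr {k k' : Fin (n + 1)}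
    {M : Matrix (Fin (n.choose k)) (Fin (n.choose k)) (MonoidAlgebra K (Equiv.Perm (Fin (k : ℕ))))}
    {M' : Matrix (Fin (n.choose k')) (Fin (n.choose k')) (MonoidAlgebra K (Equiv.Perm (Fin (k' : ℕ))))}
    (h : k = k') (hM : HEq M M') :
    (Pi.single k M : Tgt K n) = Pi.single k' M' := by
  subst h
  rw [eq_of_heq hM]

lemma sbm_heq {c c' : ℕ} (hc : c = c') (i j : Fin (n.choose c)) (i' j' : Fin (n.choose c'))
    (hi : (i : ℕ) = (i' : ℕ)) (hj : (j : ℕ) = (j' : ℕ))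
    (σ : Equiv.Perm (Fin c)) (σ' : Equiv.Perm (Fin c'))
    (hσ : ∀ (m : ℕ) (h1 : m < c) (h2 : m < c'), ((σ ⟨m, h1⟩ : Fin c) : ℕ) = ((σ' ⟨m, h2⟩ : Fin c') : ℕ)) :
    HEq (Matrix.single i j (MonoidAlgebra.single σ (1 : K)))
      (Matrix.single i' j' (MonoidAlgebra.single σ' (1 : K))) := by
  subst hc
  cases Fin.ext hi
  cases Fin.ext hj
  have hss : σ = σ' := by
    apply Equiv.ext
    intro x
    exact Fin.ext (hσ x.1 x.2 x.2)
  rw [hss]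

lemma el_retype (u : rookMonoid n) (k : Fin (n + 1)) (hk : rkF u = k) :
    el K u = Pi.single k (Matrix.single
      (Fin.cast (by rw [hk]) (iIdx u)) (Fin.cast (by rw [hk]) (jIdx u))
      (MonoidAlgebra.single ((finCongr (show ((rkF u : ℕ)) = (k : ℕ) by rw [hk])).permCongr (permF u)) 1)) := by
  refine piSingle_congr K hk (sbm_heq K (by rw [hk]) _ _ _ _ (by simp) (by simp) _ _ ?_)
  intro m h1 h2
  simp only [Equiv.permCongr_apply, finCongr_apply, Fin.coe_cast]
  have harg : (⟨m, h1⟩ : Fin ((rkF u : ℕ))) =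
      (finCongr (show ((rkF u : ℕ)) = (k : ℕ) by rw [hk])).symm ⟨m, h2⟩ := Fin.ext (by simp)
  rw [← harg]

end RookAux
namespace RookAux

variable {n : ℕ}

lemma subEquiv_inj {k k' : Fin (n + 1)} (h : k = k')
    (X : {s : Finset (Fin n) // s.card = (k : ℕ)}) (X' : {s : Finset (Fin n) // s.card = (k' : ℕ)})
    (hval : ((subEquiv k X : ℕ)) = ((subEquiv k' X' : ℕ))) : X.1 = X'.1 := by
  subst h
  have h2 : subEquiv k X = subEquiv k X' := Fin.ext hval
  exact congrArg Subtype.val ((subEquiv k).injective h2)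

lemma permF_mul (u v : rookMonoid n) (h : dm u = rn v) (m : ℕ)
    (h1 : m < (dm (u * v)).card) (h2 : m < (dm v).card)
    (h3 : ((permF v ⟨m, h2⟩ : Fin (dm v).card) : ℕ) < (dm u).card) :
    ((permF (u * v) ⟨m, h1⟩ : Fin (dm (u * v)).card) : ℕ) =
      ((permF u ⟨((permF v ⟨m, h2⟩ : Fin (dm v).card) : ℕ), h3⟩ : Fin (dm u).card) : ℕ) := by
  have hdm : dm (u * v) = dm v := dm_mul_eq u v h
  have hrn : rn (u * v) = rn u := rn_mul_eq u v h
  have hcard : (dm u).card = (dm (u * v)).card := by rw [h, card_rn, hdm]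
  set x : Fin (dm (u * v)).card := ⟨m, h1⟩
  set x2 : Fin (dm v).card := ⟨m, h2⟩
  set x3 : Fin (dm u).card := ⟨((permF v x2 : Fin (dm v).card) : ℕ), h3⟩
  set y : Fin (dm (u * v)).card := ⟨((permF u x3 : Fin (dm u).card) : ℕ), by
    rw [← hcard]; exact (permF u x3).2⟩
  have key : (u * v).1 (some (((dm (u * v)).orderIsoOfFin rfl x : {a // a ∈ dm (u * v)}) : Fin n)) =
      some (((rn (u * v)).orderIsoOfFin (card_rn (u * v)) y : {a // a ∈ rn (u * v)}) : Fin n) := by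
    rw [mul_apply]
    have e1 : (((dm (u * v)).orderIsoOfFin rfl x : {a // a ∈ dm (u * v)}) : Fin n) =
        (((dm v).orderIsoOfFin rfl x2 : {a // a ∈ dm v}) : Fin n) := oio_congr hdm rfl rfl rfl
    rw [e1, permF_spec v x2]
    have e2 : (((rn v).orderIsoOfFin (card_rn v) (permF v x2) : {a // a ∈ rn v}) : Fin n) =
        (((dm u).orderIsoOfFin rfl x3 : {a // a ∈ dm u}) : Fin n) := oio_congr h.symm _ rfl rfl
    rw [e2, permF_spec u x3]
    congr 1
    exact (oio_congr hrn (card_rn (u * v)) (card_rn u) rfl).symm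
  have := permF_uniq (u * v) x y key
  rw [this]

lemma el_mul_of_eq (K : Type) [CommRing K] (u v : rookMonoid n) (h : dm u = rn v) :
    el K u * el K v = el K (u * v) := by
  have hdm : dm (u * v) = dm v := dm_mul_eq u v h
  have hrn : rn (u * v) = rn u := rn_mul_eq u v h
  have hcu : ((rkF u : ℕ)) = ((rkF (u * v) : ℕ)) := by
    show (dm u).card = (dm (u * v)).card
    rw [h, card_rn, hdm]
  have hcv : ((rkF v : ℕ)) = ((rkF (u * v) : ℕ)) := by
    show (dm v).card = (dm (u * v)).card
    rw [hdm]
  have hku : rkF u = rkF (u * v) := Fin.ext hcu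
  have hkv : rkF v = rkF (u * v) := Fin.ext hcv
  rw [el_retype K u (rkF (u * v)) hku, el_retype K v (rkF (u * v)) hkv, ← Pi.single_mul]
  have hmid : Fin.cast (show n.choose (rkF u : ℕ) = n.choose ((rkF (u*v) : ℕ)) by rw [hku]) (jIdx u) =
      Fin.cast (show n.choose (rkF v : ℕ) = n.choose ((rkF (u*v) : ℕ)) by rw [hkv]) (iIdx v) := by
    apply Fin.ext
    simp only [Fin.coe_cast]
    exact subEquiv_val_congr (hku.trans hkv.symm) ⟨dm u, rfl⟩ ⟨rn v, card_rn v⟩ h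
  rw [hmid, Matrix.single_mul_single_same, MonoidAlgebra.single_mul_single, one_mul]
  have hi : Fin.cast (show n.choose (rkF u : ℕ) = n.choose ((rkF (u*v) : ℕ)) by rw [hku]) (iIdx u) =
      iIdx (u * v) := by
    apply Fin.ext
    simp only [Fin.coe_cast]
    exact subEquiv_val_congr hku ⟨rn u, card_rn u⟩ ⟨rn (u * v), card_rn (u * v)⟩ hrn.symm
  have hj : Fin.cast (show n.choose (rkF v : ℕ) = n.choose ((rkF (u*v) : ℕ)) by rw [hkv]) (jIdx v) =
      jIdx (u * v) := by
    apply Fin.ext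
    simp only [Fin.coe_cast]
    exact subEquiv_val_congr hkv ⟨dm v, rfl⟩ ⟨dm (u * v), rfl⟩ hdm.symm
  have hperm : (finCongr hcu).permCongr (permF u) * (finCongr hcv).permCongr (permF v) =
      permF (u * v) := by
    apply Equiv.ext
    intro x
    apply Fin.ext
    rw [Equiv.Perm.mul_apply]
    simp only [Equiv.permCongr_apply, finCongr_apply, Fin.coe_cast]
    have h2 : ((x : ℕ)) < (dm v).card := lt_of_lt_of_eq x.2 (by rw [← hcv])
    have h3 : ((permF v ⟨(x : ℕ), h2⟩ : Fin (dm v).card) : ℕ) < (dm u).card :=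
      lt_of_lt_of_eq (permF v ⟨(x : ℕ), h2⟩).2 (by rw [h, card_rn])
    exact (permF_mul u v h (x : ℕ) x.2 h2 h3).symm
  have target : el K (u * v) = Pi.single (rkF (u * v)) (Matrix.single (iIdx (u * v))
      (jIdx (u * v)) (MonoidAlgebra.single (permF (u * v)) (1 : K))) := rfl
  rw [target, hi, hj, hperm]

lemma el_mul_of_ne (K : Type) [CommRing K] (u v : rookMonoid n) (h : dm u ≠ rn v) :
    el K u * el K v = 0 := by
  by_cases hk : rkF u = rkF v
  · rw [el_retype K u (rkF v) hk, show el K v = Pi.single (rkF v) (Matrix.single (iIdx v)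
      (jIdx v) (MonoidAlgebra.single (permF v) (1 : K))) from rfl, ← Pi.single_mul]
    have hne : Fin.cast (show n.choose (rkF u : ℕ) = n.choose ((rkF v : ℕ)) by rw [hk]) (jIdx u) ≠
        iIdx v := by
      intro he
      apply h
      apply subEquiv_inj hk ⟨dm u, rfl⟩ ⟨rn v, card_rn v⟩
      have := congrArg (fun z : Fin (n.choose (rkF v : ℕ)) => (z : ℕ)) he
      exact this
    rw [Matrix.single_mul_single_of_ne (h := hne), Pi.single_zero]
  · funext k0
    show (Pi.single (rkF u) _ * Pi.single (rkF v) _ : Tgt K n) k0 = _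
    rw [Pi.mul_apply]
    by_cases hk0 : k0 = rkF v
    · have hne0 : k0 ≠ rkF u := by rw [hk0]; exact fun hh => hk hh.symm
      rw [Pi.single_eq_of_ne hne0, zero_mul]
      rfl
    · rw [Pi.single_eq_of_ne hk0, mul_zero]
      rfl

lemma el_mk (K : Type) [CommRing K] (k : Fin (n + 1))
    (B A : {s : Finset (Fin n) // s.card = (k : ℕ)}) (σ : Equiv.Perm (Fin (k : ℕ))) :
    el K (mk k B A σ) =
      Pi.single k (Matrix.single (subEquiv k B) (subEquiv k A)
        (MonoidAlgebra.single σ (1 : K))) := by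
  have hk : rkF (mk k B A σ) = k := by
    apply Fin.ext
    show (dm (mk k B A σ)).card = (k : ℕ)
    rw [dm_mk]
    exact A.2
  refine piSingle_congr K hk (sbm_heq K (by rw [hk]) _ _ _ _ ?_ ?_ _ _ ?_)
  · exact subEquiv_val_congr hk ⟨rn (mk k B A σ), card_rn _⟩ B (rn_mk k B A σ)
  · exact subEquiv_val_congr hk ⟨dm (mk k B A σ), rfl⟩ A (dm_mk k B A σ)
  · intro m h1 h2
    exact permF_mk k B A σ m h1 h2

end RookAux
namespace RookAux

variable {n : ℕ}

lemma card_lt_succ (T : Finset (Fin n)) : T.card < n + 1 :=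
  Nat.lt_succ_of_le (le_trans (Finset.card_le_card (Finset.subset_univ _))
    (le_of_eq (by rw [Finset.card_univ, Fintype.card_fin])))

lemma dm_one : dm (1 : rookMonoid n) = Finset.univ := by
  ext a
  simp only [Finset.mem_univ, iff_true, mem_dm, one_apply]
  simp

lemma restr_one_eq_mk (k : Fin (n + 1)) (A : {s : Finset (Fin n) // s.card = (k : ℕ)}) :
    restr (1 : rookMonoid n) A.1 = mk k A A 1 := by
  apply ext_rook
  intro a
  rw [restr_apply]
  by_cases ha : a ∈ A.1
  · rw [if_pos ha, mk_apply_of_mem k A A 1 ha, one_apply]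
    simp
  · rw [if_neg ha, mk_apply_of_not_mem k A A 1 ha]

/-- the sigma-type indexing of subsets -/
def sigmaEquiv (n : ℕ) : (Σ k : Fin (n + 1), Fin (n.choose k)) ≃ Finset (Fin n) where
  toFun p := ((subEquiv p.1).symm p.2).1
  invFun T := ⟨⟨T.card, card_lt_succ T⟩, subEquiv ⟨T.card, card_lt_succ T⟩ ⟨T, rfl⟩⟩
  left_inv p := by
    obtain ⟨k, i⟩ := p
    have hc : (((subEquiv k).symm i).1).card = (k : ℕ) := ((subEquiv k).symm i).2
    have h1 : (⟨(((subEquiv k).symm i).1).card, card_lt_succ _⟩ : Fin (n + 1)) = k := Fin.ext hc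
    refine Sigma.ext h1 ?_
    exact (subEquiv_heq h1 ⟨((subEquiv k).symm i).1, rfl⟩ ((subEquiv k).symm i) rfl).trans
      (heq_of_eq ((subEquiv k).apply_symm_apply i))
  right_inv T :=
    congrArg Subtype.val ((subEquiv ⟨T.card, card_lt_succ T⟩).symm_apply_apply ⟨T, rfl⟩)

variable (K : Type) [CommRing K]

lemma sum_stdBasis_diag (m : ℕ) (R : Type) [Semiring R] :
    ∑ i : Fin m, Matrix.single i i (1 : R) = 1 := by
  ext a b
  rw [Matrix.sum_apply]
  simp only [Matrix.single, Matrix.one_apply, Matrix.of_apply, ite_and]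
  rw [Finset.sum_ite_eq' (Finset.univ : Finset (Fin m)) a (fun i => if i = b then (1 : R) else 0)]
  simp

lemma piSingle_sum {ι : Type} (s : Finset ι) (k : Fin (n + 1))
    (M : ι → Matrix (Fin (n.choose k)) (Fin (n.choose k))
      (MonoidAlgebra K (Equiv.Perm (Fin (k : ℕ))))) :
    ∑ i ∈ s, (Pi.single k (M i) : Tgt K n) = Pi.single k (∑ i ∈ s, M i) := by
  funext k0
  rw [Finset.sum_apply]
  by_cases hk : k0 = k
  · subst hk
    rw [Pi.single_eq_same (M := fun k : Fin (n + 1) => Matrix (Fin (n.choose k)) (Fin (n.choose k)) (MonoidAlgebra K (Equiv.Perm (Fin (k : ℕ)))))]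
    exact Finset.sum_congr rfl fun i _ => Pi.single_eq_same (M := fun k : Fin (n + 1) => Matrix (Fin (n.choose k)) (Fin (n.choose k)) (MonoidAlgebra K (Equiv.Perm (Fin (k : ℕ))))) k0 (M i)
  · rw [Pi.single_eq_of_ne (M := fun k : Fin (n + 1) => Matrix (Fin (n.choose k)) (Fin (n.choose k)) (MonoidAlgebra K (Equiv.Perm (Fin (k : ℕ))))) hk]
    refine Finset.sum_eq_zero fun i _ => Pi.single_eq_of_ne (M := fun k : Fin (n + 1) => Matrix (Fin (n.choose k)) (Fin (n.choose k)) (MonoidAlgebra K (Equiv.Perm (Fin (k : ℕ))))) hk (M i)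

/-- the multiplicative basis-sum map -/
def phi0 (s : rookMonoid n) : Tgt K n := ∑ T ∈ (dm s).powerset, el K (restr s T)

lemma phi0_one : phi0 K (1 : rookMonoid n) = 1 := by
  rw [phi0, dm_one, Finset.powerset_univ]
  have step1 : ∀ p : (Σ k : Fin (n + 1), Fin (n.choose k)),
      el K (restr (1 : rookMonoid n) (sigmaEquiv n p)) =
        Pi.single p.1 (Matrix.single p.2 p.2 (MonoidAlgebra.single 1 (1 : K))) := by
    rintro ⟨k, i⟩
    show el K (restr 1 ((subEquiv k).symm i).1) = _
    rw [restr_one_eq_mk k ((subEquiv k).symm i), el_mk, Equiv.apply_symm_apply]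
  calc ∑ T : Finset (Fin n), el K (restr 1 T)
      = ∑ p : (Σ k : Fin (n + 1), Fin (n.choose k)), el K (restr 1 (sigmaEquiv n p)) :=
        (Equiv.sum_comp (sigmaEquiv n) (fun T => el K (restr 1 T))).symm
    _ = ∑ p : (Σ k : Fin (n + 1), Fin (n.choose k)),
          Pi.single p.1 (Matrix.single p.2 p.2 (MonoidAlgebra.single 1 (1 : K))) :=
        Finset.sum_congr rfl (fun p _ => step1 p)
    _ = ∑ k : Fin (n + 1), ∑ i : Fin (n.choose k),
          Pi.single k (Matrix.single i i (MonoidAlgebra.single 1 (1 : K))) := by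
        rw [← Finset.univ_sigma_univ, Finset.sum_sigma]
    _ = ∑ k : Fin (n + 1), Pi.single k (1 : Matrix (Fin (n.choose k)) (Fin (n.choose k))
          (MonoidAlgebra K (Equiv.Perm (Fin (k : ℕ))))) := by
        refine Finset.sum_congr rfl (fun k _ => ?_)
        rw [piSingle_sum]
        have hm : (∑ i : Fin (n.choose k), Matrix.single i i
            (MonoidAlgebra.single 1 (1 : K))) = (1 : Matrix (Fin (n.choose k)) (Fin (n.choose k))
            (MonoidAlgebra K (Equiv.Perm (Fin (k : ℕ))))) := by
          rw [← MonoidAlgebra.one_def]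
          exact sum_stdBasis_diag (n.choose k) (MonoidAlgebra K (Equiv.Perm (Fin (k : ℕ))))
        rw [hm]
    _ = 1 := by
        funext k0
        rw [Finset.sum_apply]
        exact Fintype.sum_pi_single k0 (fun c : Fin (n + 1) =>
          (1 : Matrix (Fin (n.choose c)) (Fin (n.choose c))
            (MonoidAlgebra K (Equiv.Perm (Fin (c : ℕ))))))

lemma phi0_mul (s t : rookMonoid n) : phi0 K (s * t) = phi0 K s * phi0 K t := by
  rw [phi0, phi0, phi0, Finset.sum_mul_sum ((dm s).powerset) ((dm t).powerset)
    (fun T => el K (restr s T)) (fun T' => el K (restr t T'))]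
  rw [Finset.sum_comm]
  symm
  calc ∑ T' ∈ (dm t).powerset, ∑ T ∈ (dm s).powerset, el K (restr s T) * el K (restr t T')
      = ∑ T' ∈ (dm t).powerset, ∑ T ∈ (dm s).powerset,
          (if T = rn (restr t T') then el K (restr s T * restr t T') else 0) := by
        refine Finset.sum_congr rfl fun T' hT' => Finset.sum_congr rfl fun T hT => ?_
        by_cases hc : T = rn (restr t T')
        · rw [if_pos hc]
          apply el_mul_of_eq
          rw [dm_restr (Finset.mem_powerset.1 hT)]
          exact hc
        · rw [if_neg hc]
          apply el_mul_of_ne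
          rw [dm_restr (Finset.mem_powerset.1 hT)]
          exact hc
    _ = ∑ T' ∈ (dm t).powerset,
          (if rn (restr t T') ∈ (dm s).powerset then
            el K (restr s (rn (restr t T')) * restr t T') else 0) := by
        refine Finset.sum_congr rfl fun T' hT' => ?_
        rw [Finset.sum_ite_eq' ((dm s).powerset) (rn (restr t T'))
          (fun T => el K (restr s T * restr t T'))]
    _ = ∑ T' ∈ (dm t).powerset,
          (if T' ∈ (dm (s * t)).powerset then el K (restr (s * t) T') else 0) := by
        refine Finset.sum_congr rfl fun T' hT' => ?_
        have hT'sub : T' ⊆ dm t := Finset.mem_powerset.1 hT'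
        by_cases hc : T' ⊆ dm (s * t)
        · rw [if_pos (Finset.mem_powerset.2 hc),
            if_pos (Finset.mem_powerset.2 ((rn_restr_subset_iff s t hT'sub).2 hc)),
            restr_mul s t hc]
        · rw [if_neg (fun hmem => hc (Finset.mem_powerset.1 hmem)),
            if_neg (fun hmem => hc ((rn_restr_subset_iff s t hT'sub).1
              (Finset.mem_powerset.1 hmem)))]
    _ = ∑ T' ∈ (dm t).powerset ∩ (dm (s * t)).powerset, el K (restr (s * t) T') :=
        Finset.sum_ite_mem _ _ _
    _ = ∑ T' ∈ (dm (s * t)).powerset, el K (restr (s * t) T') := by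
        rw [Finset.inter_eq_right.2 (Finset.powerset_mono.2 (dm_mul_subset s t))]

/-- the monoid homomorphism -/
def phiMon : (rookMonoid n) →* Tgt K n where
  toFun := phi0 K
  map_one' := phi0_one K
  map_mul' := phi0_mul K

/-- the algebra homomorphism -/
def Phi : MonoidAlgebra K (rookMonoid n) →ₐ[K] Tgt K n :=
  MonoidAlgebra.lift K (Tgt K n) (rookMonoid n) (phiMon K)

lemma Phi_single (s : rookMonoid n) :
    Phi K (MonoidAlgebra.single s (1 : K)) = phi0 K s := by
  rw [Phi, MonoidAlgebra.lift_single, one_smul]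
  rfl

end RookAux
namespace RookAux

variable {n : ℕ}

section moebius

variable (K : Type) [CommRing K]

lemma neg_one_pow_sub {a b : ℕ} (h : b ≤ a) : (-1 : K) ^ (a - b) = (-1) ^ a * (-1) ^ b := by
  have h1 : (-1 : K) ^ (a - b) * (-1) ^ b = (-1) ^ a := by
    rw [← pow_add, Nat.sub_add_cancel h]
  have h2 : (-1 : K) ^ b * (-1) ^ b = 1 := by
    rw [← pow_add, ← two_mul, pow_mul]
    norm_num
  calc (-1 : K) ^ (a - b) = (-1) ^ (a - b) * ((-1) ^ b * (-1) ^ b) := by rw [h2, mul_one]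
    _ = ((-1) ^ (a - b) * (-1) ^ b) * (-1) ^ b := by ring
    _ = (-1) ^ a * (-1) ^ b := by rw [h1]

lemma sum_pow_neg_one (D : Finset (Fin n)) :
    ∑ U ∈ D.powerset, (-1 : K) ^ U.card = if D = ∅ then 1 else 0 := by
  have h := Finset.sum_powerset_neg_one_pow_card (x := D)
  have h2 : ((∑ U ∈ D.powerset, (-1 : ℤ) ^ U.card : ℤ) : K) =
      ∑ U ∈ D.powerset, (-1 : K) ^ U.card := by push_cast; rfl
  rw [← h2, h]
  split <;> simp

lemma sum_over_interval {M : Type} [AddCommMonoid M] (A W : Finset (Fin n)) (hWA : W ⊆ A)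
    (f : Finset (Fin n) → M) :
    ∑ T ∈ A.powerset.filter (fun T => W ⊆ T), f T = ∑ U ∈ (A \ W).powerset, f (U ∪ W) := by
  refine Finset.sum_bij' (fun T _ => T \ W) (fun U _ => U ∪ W) ?_ ?_ ?_ ?_ ?_
  · intro T hT
    rw [Finset.mem_filter, Finset.mem_powerset] at hT
    rw [Finset.mem_powerset]
    exact Finset.sdiff_subset_sdiff hT.1 (Finset.Subset.refl W)
  · intro U hU
    rw [Finset.mem_powerset] at hU
    rw [Finset.mem_filter, Finset.mem_powerset]
    exact ⟨Finset.union_subset (hU.trans (Finset.sdiff_subset)) hWA, Finset.subset_union_right⟩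
  · intro T hT
    rw [Finset.mem_filter] at hT
    exact Finset.sdiff_union_of_subset hT.2
  · intro U hU
    rw [Finset.mem_powerset] at hU
    show (U ∪ W) \ W = U
    rw [Finset.union_sdiff_right]
    exact Finset.sdiff_eq_self_of_disjoint (Finset.disjoint_of_subset_left hU Finset.sdiff_disjoint)
  · intro T hT
    rw [Finset.mem_filter] at hT
    rw [Finset.sdiff_union_of_subset hT.2]

lemma disj_card {A W U : Finset (Fin n)} (hU : U ⊆ A \ W) : (U ∪ W).card = U.card + W.card :=
  Finset.card_union_of_disjoint (Finset.disjoint_of_subset_left hU Finset.sdiff_disjoint)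

lemma sdiff_empty_iff {A W : Finset (Fin n)} (hWA : W ⊆ A) : A \ W = ∅ ↔ W = A := by
  rw [Finset.sdiff_eq_empty_iff_subset]
  exact ⟨fun h => Finset.Subset.antisymm hWA h, fun h => le_of_eq h.symm⟩

lemma moebius1 (A W : Finset (Fin n)) (hWA : W ⊆ A) :
    ∑ T ∈ A.powerset.filter (fun T => W ⊆ T), (-1 : K) ^ (T.card - W.card) =
      if W = A then 1 else 0 := by
  rw [sum_over_interval A W hWA]
  have step : ∀ U ∈ (A \ W).powerset, (-1 : K) ^ ((U ∪ W).card - W.card) = (-1) ^ U.card := by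
    intro U hU
    rw [disj_card (Finset.mem_powerset.1 hU), Nat.add_sub_cancel]
  rw [Finset.sum_congr rfl step, sum_pow_neg_one]
  simp only [sdiff_empty_iff hWA]

lemma moebius2 (A W : Finset (Fin n)) (hWA : W ⊆ A) :
    ∑ T ∈ A.powerset.filter (fun T => W ⊆ T), (-1 : K) ^ (A.card - T.card) =
      if W = A then 1 else 0 := by
  rw [sum_over_interval A W hWA]
  have step : ∀ U ∈ (A \ W).powerset, (-1 : K) ^ (A.card - (U ∪ W).card) =
      (-1) ^ (A \ W).card * (-1) ^ U.card := by
    intro U hU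
    have hU' := Finset.mem_powerset.1 hU
    have hle : (U ∪ W).card ≤ A.card :=
      Finset.card_le_card (Finset.union_subset (hU'.trans Finset.sdiff_subset) hWA)
    rw [disj_card hU', Finset.card_sdiff_of_subset hWA]
    have hUle : U.card ≤ A.card - W.card := by
      have := Finset.card_le_card hU'
      rwa [Finset.card_sdiff_of_subset hWA] at this
    have hWle : W.card ≤ A.card := Finset.card_le_card hWA
    have harith : A.card - (U.card + W.card) = (A.card - W.card) - U.card := by omega
    rw [harith, neg_one_pow_sub K hUle]
  rw [Finset.sum_congr rfl step, ← Finset.mul_sum, sum_pow_neg_one]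
  by_cases h : W = A
  · rw [if_pos ((sdiff_empty_iff hWA).2 h), if_pos h, (sdiff_empty_iff hWA).2 h]
    simp
  · rw [if_neg (fun he => h ((sdiff_empty_iff hWA).1 he)), if_neg h, mul_zero]

end moebius

variable (K : Type) [CommRing K]

/-- preimage under Psi of the standard basis elements -/
def psiF (k : Fin (n + 1)) (i j : Fin (n.choose k)) (σ : Equiv.Perm (Fin (k : ℕ))) :
    MonoidAlgebra K (rookMonoid n) :=
  ∑ T ∈ (((subEquiv k).symm j).1).powerset,
    ((-1 : K) ^ ((k : ℕ) - T.card)) •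
      MonoidAlgebra.single (restr (mk k ((subEquiv k).symm i) ((subEquiv k).symm j) σ) T) (1 : K)

/-- the inverse map -/
def psiFun (x : Tgt K n) : MonoidAlgebra K (rookMonoid n) :=
  ∑ k : Fin (n + 1), ∑ i : Fin (n.choose k), ∑ j : Fin (n.choose k),
    ∑ σ : Equiv.Perm (Fin (k : ℕ)), ((x k i j).coeff σ) • psiF K k i j σ

lemma psiFun_zero : psiFun K (0 : Tgt K n) = 0 := by
  rw [psiFun]
  refine Finset.sum_eq_zero fun k _ => Finset.sum_eq_zero fun i _ =>
    Finset.sum_eq_zero fun j _ => Finset.sum_eq_zero fun σ _ => ?_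
  show ((0 : Tgt K n) k i j).coeff σ • psiF K k i j σ = 0
  have : ((0 : Tgt K n) k i j).coeff σ = 0 := rfl
  rw [this, zero_smul]

lemma psiFun_add (x y : Tgt K n) : psiFun K (x + y) = psiFun K x + psiFun K y := by
  rw [psiFun, psiFun, psiFun, ← Finset.sum_add_distrib]
  refine Finset.sum_congr rfl fun k _ => ?_
  rw [← Finset.sum_add_distrib]
  refine Finset.sum_congr rfl fun i _ => ?_
  rw [← Finset.sum_add_distrib]
  refine Finset.sum_congr rfl fun j _ => ?_
  rw [← Finset.sum_add_distrib]
  refine Finset.sum_congr rfl fun σ _ => ?_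
  show ((x + y) k i j).coeff σ • psiF K k i j σ = _
  have : ((x + y) k i j).coeff σ = (x k i j).coeff σ + (y k i j).coeff σ := rfl
  rw [this, add_smul]

lemma psiFun_smul (c : K) (x : Tgt K n) : psiFun K (c • x) = c • psiFun K x := by
  rw [psiFun, psiFun, Finset.smul_sum]
  refine Finset.sum_congr rfl fun k _ => ?_
  rw [Finset.smul_sum]
  refine Finset.sum_congr rfl fun i _ => ?_
  rw [Finset.smul_sum]
  refine Finset.sum_congr rfl fun j _ => ?_
  rw [Finset.smul_sum]
  refine Finset.sum_congr rfl fun σ _ => ?_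
  show ((c • x) k i j).coeff σ • psiF K k i j σ = _
  have : ((c • x) k i j).coeff σ = c * (x k i j).coeff σ := rfl
  rw [this, mul_smul]

lemma psiFun_sum {ι : Type} (s : Finset ι) (g : ι → Tgt K n) :
    psiFun K (∑ i ∈ s, g i) = ∑ i ∈ s, psiFun K (g i) := by
  classical
  induction s using Finset.induction_on with
  | empty => simp [psiFun_zero]
  | insert _ _ hs ih =>
    rw [Finset.sum_insert hs, Finset.sum_insert hs, psiFun_add, ih]

end RookAux
namespace RookAux

variable {n : ℕ}

variable (K : Type) [CommRing K]

lemma psi_el (u : rookMonoid n) :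
    psiFun K (el K u) =
      ∑ T ∈ (dm u).powerset, (-1 : K) ^ ((dm u).card - T.card) •
        MonoidAlgebra.single (restr u T) (1 : K) := by
  have hentry : ∀ i j, (Matrix.single (iIdx u) (jIdx u)
      (MonoidAlgebra.single (permF u) (1 : K))) i j =
      if iIdx u = i ∧ jIdx u = j then MonoidAlgebra.single (permF u) (1 : K) else 0 :=
    fun i j => rfl
  have hsame : el K u (rkF u) = Matrix.single (iIdx u) (jIdx u)
      (MonoidAlgebra.single (permF u) (1 : K)) :=
    Pi.single_eq_same (M := fun k : Fin (n + 1) => Matrix (Fin (n.choose k)) (Fin (n.choose k))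
      (MonoidAlgebra K (Equiv.Perm (Fin (k : ℕ))))) (rkF u) _
  calc psiFun K (el K u)
      = ∑ i : Fin (n.choose (rkF u)), ∑ j : Fin (n.choose (rkF u)),
          ∑ σ : Equiv.Perm (Fin ((rkF u : ℕ))), ((el K u) (rkF u) i j).coeff σ • psiF K (rkF u) i j σ := by
        rw [psiFun]
        refine Finset.sum_eq_single_of_mem (rkF u) (Finset.mem_univ _) (fun k _ hk => ?_)
        refine Finset.sum_eq_zero fun i _ => Finset.sum_eq_zero fun j _ =>
          Finset.sum_eq_zero fun σ _ => ?_
        have h0 : el K u k = 0 :=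
          Pi.single_eq_of_ne (M := fun k : Fin (n + 1) => Matrix (Fin (n.choose k))
            (Fin (n.choose k)) (MonoidAlgebra K (Equiv.Perm (Fin (k : ℕ))))) hk _
        have h1 : ((el K u) k i j).coeff σ = 0 := by rw [h0]; rfl
        rw [h1, zero_smul]
    _ = ∑ σ : Equiv.Perm (Fin ((rkF u : ℕ))),
          ((el K u) (rkF u) (iIdx u) (jIdx u)).coeff σ • psiF K (rkF u) (iIdx u) (jIdx u) σ := by
        refine (Finset.sum_eq_single_of_mem (iIdx u) (Finset.mem_univ _) (fun i _ hi => ?_)).trans ?_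
        · refine Finset.sum_eq_zero fun j _ => Finset.sum_eq_zero fun σ _ => ?_
          have h1 : ((el K u) (rkF u) i j).coeff σ = 0 := by
            rw [hsame, hentry i j, if_neg (fun hc => hi hc.1.symm)]
            rfl
          rw [h1, zero_smul]
        · refine Finset.sum_eq_single_of_mem (jIdx u) (Finset.mem_univ _) (fun j _ hj => ?_)
          refine Finset.sum_eq_zero fun σ _ => ?_
          have h1 : ((el K u) (rkF u) (iIdx u) j).coeff σ = 0 := by
            rw [hsame, hentry (iIdx u) j, if_neg (fun hc => hj hc.2.symm)]
            rfl
          rw [h1, zero_smul]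
    _ = psiF K (rkF u) (iIdx u) (jIdx u) (permF u) := by
        refine (Finset.sum_eq_single_of_mem (permF u) (Finset.mem_univ _) (fun σ _ hσ => ?_)).trans ?_
        · have h1 : ((el K u) (rkF u) (iIdx u) (jIdx u)).coeff σ = 0 := by
            rw [hsame, hentry (iIdx u) (jIdx u), if_pos ⟨rfl, rfl⟩]
            exact Finsupp.single_eq_of_ne hσ
          rw [h1, zero_smul]
        · have h1 : ((el K u) (rkF u) (iIdx u) (jIdx u)).coeff (permF u) = 1 := by
            rw [hsame, hentry (iIdx u) (jIdx u), if_pos ⟨rfl, rfl⟩]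
            exact Finsupp.single_eq_same
          rw [h1, one_smul]
    _ = ∑ T ∈ (dm u).powerset, (-1 : K) ^ ((dm u).card - T.card) •
          MonoidAlgebra.single (restr u T) (1 : K) := by
        have hi' : (subEquiv (rkF u)).symm (iIdx u) = ⟨rn u, card_rn u⟩ :=
          Equiv.symm_apply_apply _ _
        have hj' : (subEquiv (rkF u)).symm (jIdx u) = ⟨dm u, rfl⟩ :=
          Equiv.symm_apply_apply _ _
        rw [psiF, hi', hj', mk_self]

lemma psi_phi (s : rookMonoid n) : psiFun K (phi0 K s) = MonoidAlgebra.single s (1 : K) := by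
  rw [phi0, psiFun_sum]
  calc ∑ T ∈ (dm s).powerset, psiFun K (el K (restr s T))
      = ∑ T ∈ (dm s).powerset, ∑ W ∈ T.powerset,
          (-1 : K) ^ (T.card - W.card) • MonoidAlgebra.single (restr s W) (1 : K) := by
        refine Finset.sum_congr rfl fun T hT => ?_
        rw [psi_el, dm_restr (Finset.mem_powerset.1 hT)]
        refine Finset.sum_congr rfl fun W hW => ?_
        rw [restr_restr s (Finset.mem_powerset.1 hW)]
    _ = ∑ W ∈ (dm s).powerset, ∑ T ∈ (dm s).powerset.filter (fun T => W ⊆ T),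
          (-1 : K) ^ (T.card - W.card) • MonoidAlgebra.single (restr s W) (1 : K) := by
        refine Finset.sum_comm' ?_
        intro T W
        simp only [Finset.mem_powerset, Finset.mem_filter]
        constructor
        · rintro ⟨h1, h2⟩
          exact ⟨⟨h1, h2⟩, h2.trans h1⟩
        · rintro ⟨⟨h1, h2⟩, _⟩
          exact ⟨h1, h2⟩
    _ = ∑ W ∈ (dm s).powerset, (∑ T ∈ (dm s).powerset.filter (fun T => W ⊆ T),
          (-1 : K) ^ (T.card - W.card)) • MonoidAlgebra.single (restr s W) (1 : K) := by
        refine Finset.sum_congr rfl fun W _ => ?_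
        rw [Finset.sum_smul]
    _ = ∑ W ∈ (dm s).powerset,
          (if W = dm s then MonoidAlgebra.single (restr s W) (1 : K) else 0) := by
        refine Finset.sum_congr rfl fun W hW => ?_
        rw [moebius1 K (dm s) W (Finset.mem_powerset.1 hW), ite_smul, one_smul, zero_smul]
    _ = MonoidAlgebra.single s (1 : K) := by
        rw [Finset.sum_ite_eq' ((dm s).powerset) (dm s)
          (fun W => MonoidAlgebra.single (restr s W) (1 : K)),
          if_pos (Finset.mem_powerset_self _), restr_dm]

lemma phi_psiF (k : Fin (n + 1)) (i j : Fin (n.choose k)) (σ : Equiv.Perm (Fin (k : ℕ))) :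
    Phi K (psiF K k i j σ) =
      Pi.single k (Matrix.single i j (MonoidAlgebra.single σ (1 : K))) := by
  set u0 := mk k ((subEquiv k).symm i) ((subEquiv k).symm j) σ with hu0
  have hdm : dm u0 = ((subEquiv k).symm j).1 := dm_mk _ _ _ _
  rw [psiF, map_sum]
  calc ∑ T ∈ ((((subEquiv k).symm j)).1).powerset,
        Phi K ((-1 : K) ^ ((k : ℕ) - T.card) • MonoidAlgebra.single (restr u0 T) (1 : K))
      = ∑ T ∈ ((((subEquiv k).symm j)).1).powerset, ∑ W ∈ T.powerset,
          (-1 : K) ^ ((k : ℕ) - T.card) • el K (restr u0 W) := by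
        refine Finset.sum_congr rfl fun T hT => ?_
        have hT' : T ⊆ dm u0 := by rw [hdm]; exact Finset.mem_powerset.1 hT
        rw [map_smul, Phi_single, phi0, dm_restr hT', Finset.smul_sum]
        refine Finset.sum_congr rfl fun W hW => ?_
        rw [restr_restr u0 (Finset.mem_powerset.1 hW)]
    _ = ∑ W ∈ ((((subEquiv k).symm j)).1).powerset,
          ∑ T ∈ ((((subEquiv k).symm j)).1).powerset.filter (fun T => W ⊆ T),
          (-1 : K) ^ ((k : ℕ) - T.card) • el K (restr u0 W) := by
        refine Finset.sum_comm' ?_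
        intro T W
        simp only [Finset.mem_powerset, Finset.mem_filter]
        constructor
        · rintro ⟨h1, h2⟩
          exact ⟨⟨h1, h2⟩, h2.trans h1⟩
        · rintro ⟨⟨h1, h2⟩, _⟩
          exact ⟨h1, h2⟩
    _ = ∑ W ∈ ((((subEquiv k).symm j)).1).powerset,
          (if W = (((subEquiv k).symm j)).1 then el K (restr u0 W) else 0) := by
        refine Finset.sum_congr rfl fun W hW => ?_
        rw [← Finset.sum_smul]
        have hexp : ∀ T ∈ ((((subEquiv k).symm j)).1).powerset.filter (fun T => W ⊆ T),
            (-1 : K) ^ ((k : ℕ) - T.card) =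
            (-1 : K) ^ (((((subEquiv k).symm j)).1).card - T.card) := by
          intro T _
          rw [((subEquiv k).symm j).2]
        rw [Finset.sum_congr rfl hexp,
          moebius2 K (((subEquiv k).symm j)).1 W (Finset.mem_powerset.1 hW),
          ite_smul, one_smul, zero_smul]
    _ = el K u0 := by
        rw [Finset.sum_ite_eq' (((((subEquiv k).symm j)).1).powerset) ((((subEquiv k).symm j)).1)
          (fun W => el K (restr u0 W)), if_pos (Finset.mem_powerset_self _), ← hdm, restr_dm]
    _ = Pi.single k (Matrix.single i j (MonoidAlgebra.single σ (1 : K))) := by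
        rw [hu0, el_mk, Equiv.apply_symm_apply, Equiv.apply_symm_apply]

lemma ma_repr {G : Type} [Monoid G] [Fintype G] (f : MonoidAlgebra K G) :
    ∑ σ : G, (f.coeff σ) • MonoidAlgebra.single σ (1 : K) = f := by
  refine Eq.trans ?_ (congrArg MonoidAlgebra.ofCoeff (Finsupp.univ_sum_single f.coeff))
  rw [MonoidAlgebra.ofCoeff_sum]
  refine Finset.sum_congr rfl fun σ _ => ?_
  rw [MonoidAlgebra.smul_single', mul_one]
  rfl

lemma matrix_repr {m : ℕ} {G : Type} [Monoid G] [Fintype G]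
    (y : Matrix (Fin m) (Fin m) (MonoidAlgebra K G)) :
    ∑ i : Fin m, ∑ j : Fin m, ∑ σ : G,
      (y i j).coeff σ • Matrix.single i j (MonoidAlgebra.single σ (1 : K)) = y := by
  have hentry : ∀ (i j a b : Fin m) (c : MonoidAlgebra K G),
      Matrix.single i j c a b = if i = a ∧ j = b then c else 0 :=
    fun _ _ _ _ _ => rfl
  apply Matrix.ext
  intro a b
  simp only [Matrix.sum_apply, Matrix.smul_apply]
  calc ∑ i : Fin m, ∑ j : Fin m, ∑ σ : G,
        (y i j).coeff σ • (Matrix.single i j (MonoidAlgebra.single σ (1 : K))) a b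
      = ∑ j : Fin m, ∑ σ : G,
          (y a j).coeff σ • (Matrix.single a j (MonoidAlgebra.single σ (1 : K))) a b := by
        refine Finset.sum_eq_single_of_mem a (Finset.mem_univ _) (fun i _ hi => ?_)
        refine Finset.sum_eq_zero fun j _ => Finset.sum_eq_zero fun σ _ => ?_
        rw [hentry, if_neg (fun hc => hi hc.1), smul_zero]
    _ = ∑ σ : G, (y a b).coeff σ • (Matrix.single a b (MonoidAlgebra.single σ (1 : K))) a b := by
        refine Finset.sum_eq_single_of_mem b (Finset.mem_univ _) (fun j _ hj => ?_)
        refine Finset.sum_eq_zero fun σ _ => ?_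
        rw [hentry, if_neg (fun hc => hj hc.2), smul_zero]
    _ = y a b := by
        have hstep : ∀ σ : G, (y a b).coeff σ •
            (Matrix.single a b (MonoidAlgebra.single σ (1 : K))) a b =
            (y a b).coeff σ • MonoidAlgebra.single σ (1 : K) := by
          intro σ
          rw [hentry, if_pos ⟨rfl, rfl⟩]
        rw [Finset.sum_congr rfl (fun σ _ => hstep σ)]
        exact ma_repr K (y a b)

lemma tgt_repr (x : Tgt K n) :
    ∑ k : Fin (n + 1), ∑ i : Fin (n.choose k), ∑ j : Fin (n.choose k),
      ∑ σ : Equiv.Perm (Fin (k : ℕ)), (x k i j).coeff σ •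
        (Pi.single k (Matrix.single i j (MonoidAlgebra.single σ (1 : K))) : Tgt K n) = x := by
  funext k0
  rw [Finset.sum_apply]
  calc ∑ k : Fin (n + 1), (∑ i : Fin (n.choose k), ∑ j : Fin (n.choose k),
        ∑ σ : Equiv.Perm (Fin (k : ℕ)), (x k i j).coeff σ •
          (Pi.single k (Matrix.single i j (MonoidAlgebra.single σ (1 : K))) : Tgt K n)) k0
      = (∑ i : Fin (n.choose k0), ∑ j : Fin (n.choose k0),
          ∑ σ : Equiv.Perm (Fin (k0 : ℕ)), (x k0 i j).coeff σ •
            (Pi.single k0 (Matrix.single i j (MonoidAlgebra.single σ (1 : K))) : Tgt K n)) k0 := by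
        refine Finset.sum_eq_single_of_mem k0 (Finset.mem_univ _) (fun k _ hk => ?_)
        rw [Finset.sum_apply]
        refine Finset.sum_eq_zero fun i _ => ?_
        rw [Finset.sum_apply]
        refine Finset.sum_eq_zero fun j _ => ?_
        rw [Finset.sum_apply]
        refine Finset.sum_eq_zero fun σ _ => ?_
        rw [Pi.smul_apply, Pi.single_eq_of_ne (M := fun k : Fin (n + 1) =>
          Matrix (Fin (n.choose k)) (Fin (n.choose k))
            (MonoidAlgebra K (Equiv.Perm (Fin (k : ℕ))))) (Ne.symm hk), smul_zero]
    _ = ∑ i : Fin (n.choose k0), ∑ j : Fin (n.choose k0),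
          ∑ σ : Equiv.Perm (Fin (k0 : ℕ)), (x k0 i j).coeff σ •
            Matrix.single i j (MonoidAlgebra.single σ (1 : K)) := by
        rw [Finset.sum_apply]
        refine Finset.sum_congr rfl fun i _ => ?_
        rw [Finset.sum_apply]
        refine Finset.sum_congr rfl fun j _ => ?_
        rw [Finset.sum_apply]
        refine Finset.sum_congr rfl fun σ _ => ?_
        rw [Pi.smul_apply, Pi.single_eq_same (M := fun k : Fin (n + 1) =>
          Matrix (Fin (n.choose k)) (Fin (n.choose k))
            (MonoidAlgebra K (Equiv.Perm (Fin (k : ℕ)))))]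
    _ = x k0 := matrix_repr K (x k0)

lemma left_inv_phi (z : MonoidAlgebra K (rookMonoid n)) : psiFun K (Phi K z) = z := by
  induction z using MonoidAlgebra.induction_linear with
  | zero => rw [map_zero, psiFun_zero]
  | add f g hf hg => rw [map_add, psiFun_add, hf, hg]
  | single s c =>
    have h1 : (MonoidAlgebra.single s c : MonoidAlgebra K (rookMonoid n)) =
        c • MonoidAlgebra.single s (1 : K) := by
      rw [MonoidAlgebra.smul_single', mul_one]
    show psiFun K (Phi K (MonoidAlgebra.single s c)) = MonoidAlgebra.single s c
    rw [h1, map_smul, psiFun_smul, Phi_single, psi_phi]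

lemma right_inv_phi (x : Tgt K n) : Phi K (psiFun K x) = x := by
  rw [psiFun, map_sum]
  calc ∑ k : Fin (n + 1), Phi K (∑ i : Fin (n.choose k), ∑ j : Fin (n.choose k),
        ∑ σ : Equiv.Perm (Fin (k : ℕ)), ((x k i j).coeff σ) • psiF K k i j σ)
      = ∑ k : Fin (n + 1), ∑ i : Fin (n.choose k), ∑ j : Fin (n.choose k),
          ∑ σ : Equiv.Perm (Fin (k : ℕ)), (x k i j).coeff σ •
            (Pi.single k (Matrix.single i j (MonoidAlgebra.single σ (1 : K))) : Tgt K n) := by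
        refine Finset.sum_congr rfl fun k _ => ?_
        rw [map_sum]
        refine Finset.sum_congr rfl fun i _ => ?_
        rw [map_sum]
        refine Finset.sum_congr rfl fun j _ => ?_
        rw [map_sum]
        refine Finset.sum_congr rfl fun σ _ => ?_
        rw [map_smul, phi_psiF]
    _ = x := tgt_repr K x

lemma phi_bijective : Function.Bijective (Phi K : MonoidAlgebra K (rookMonoid n) → Tgt K n) := by
  constructor
  · intro a b hab
    rw [← left_inv_phi K a, hab, left_inv_phi K b]
  · intro x
    exact ⟨psiFun K x, right_inv_phi K x⟩

end RookAux

/-- For every commutative ring `K` and every `n`, there is a `K`-algebra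
isomorphism `K[R_n] ≅ ∏_{k=0}^n M_{C(n,k)}(K[Σ_k])`. -/
theorem rook_monoid_algebra_decomposition (K : Type) [CommRing K] (n : ℕ) :
    Nonempty
      (MonoidAlgebra K (rookMonoid n) ≃ₐ[K]
        ∀ k : Fin (n + 1),
          Matrix (Fin (n.choose k)) (Fin (n.choose k))
            (MonoidAlgebra K (Equiv.Perm (Fin (k : ℕ))))) := by
  exact ⟨AlgEquiv.ofBijective (RookAux.Phi K) (RookAux.phi_bijective K)⟩
end
end
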